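/- arXiv:2209.11260 — 7 statements merged into one kernel-verified Lean document; each statement's English description precedes it below -/
import Mathlib

section
/- Let P be a finite set of at least two points in the Euclidean plane, let T be a maximum-weight spanning tree of P, and let c* be the center of the smallest enclosing circle of P. Then for every edge (p,q) of T, the point c* lies in the closed diametral disk D_{pq}, i.e., the closed disk having the segment from p to q as its diameter. In particular, the diametral disks induced by the edges of T have a common point. -/
open scoped Classical
open scoped RealInnerProductSpace

/-- The Euclidean plane. -/
abbrev Plane := EuclideanSpace ℝ (Fin 2)

/-- Total edge weight of a graph on a finite point set in the plane, where the
weight of an edge `(p, q)` is the Euclidean distance `|pq|`. -/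
noncomputable def edgeWeight {P : Finset Plane} (G : SimpleGraph P) : ℝ :=
  ∑ e ∈ G.edgeFinset,
    Sym2.lift ⟨fun (a b : P) => dist (a : Plane) (b : Plane), fun _ _ => dist_comm _ _⟩ e

/-- `T` is a maximum-weight spanning tree of the point set `P`: a connected acyclic
graph on `P` whose total Euclidean edge weight is at least that of every connected
acyclic graph on `P`. -/
def IsMaxSpanningTree {P : Finset Plane} (T : SimpleGraph P) : Prop :=
  T.Connected ∧ T.IsAcyclic ∧
    ∀ T' : SimpleGraph P, T'.Connected → T'.IsAcyclic → edgeWeight T' ≤ edgeWeight T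

section Aux

/-- Auxiliary algebraic lemma (the oriented case). -/
lemma aux_key' (p0 p1 q0 q1 a0 a1 b0 b1 : ℝ)
    (hC : 0 ≤ p0*q1 - p1*q0)
    (hPQ : 0 < p0*q0+p1*q1) (hAP : a0*p0+a1*p1 ≤ 0) (hAQ : 0 < a0*q0+a1*q1)
    (hBP : 0 < b0*p0+b1*p1) (hBQ : b0*q0+b1*q1 ≤ 0) : a0*b0+a1*b1 ≤ 0 := by
  have hPP : 0 < p0^2+p1^2 := by
    nlinarith [sq_nonneg (b0*p1 - b1*p0), sq_nonneg b0, sq_nonneg b1, sq_nonneg p0, sq_nonneg p1]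
  have hQQ : 0 < q0^2+q1^2 := by
    nlinarith [sq_nonneg (a0*q1 - a1*q0), sq_nonneg a0, sq_nonneg a1, sq_nonneg q0, sq_nonneg q1]
  rcases eq_or_lt_of_le hC with h0 | hC
  · exfalso
    have hid : (a0*q0+a1*q1)*(p0^2+p1^2)
        = (a0*p0+a1*p1)*(p0*q0+p1*q1) + (p0*a1-p1*a0)*(p0*q1-p1*q0) := by ring
    rw [← h0, mul_zero] at hid
    nlinarith [mul_pos hAQ hPP, mul_nonpos_of_nonpos_of_nonneg hAP hPQ.le]
  · have h1 : 0 < (p0*a1-p1*a0)*(p0*q1-p1*q0) := by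
      nlinarith [mul_pos hPP hAQ, mul_nonpos_of_nonneg_of_nonpos hPQ.le hAP]
    have hcPA : 0 < p0*a1-p1*a0 := by nlinarith [h1, hC]
    have h2 : 0 < (b0*q1-b1*q0)*(p0*q1-p1*q0) := by
      nlinarith [mul_pos hQQ hBP, mul_nonpos_of_nonneg_of_nonpos hPQ.le hBQ]
    have hcBQ : 0 < b0*q1-b1*q0 := by nlinarith [h2, hC]
    have hb1 : (p0^2+p1^2)*(a0*q0+a1*q1) ≤ (p0*a1-p1*a0)*(p0*q1-p1*q0) := by
      nlinarith [mul_nonpos_of_nonneg_of_nonpos hPQ.le hAP]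
    have hb2 : (q0^2+q1^2)*(b0*p0+b1*p1) ≤ (b0*q1-b1*q0)*(p0*q1-p1*q0) := by
      nlinarith [mul_nonpos_of_nonneg_of_nonpos hPQ.le hBQ]
    have hCS : (p0*q1-p1*q0)^2 ≤ (p0^2+p1^2)*(q0^2+q1^2) := by nlinarith [sq_nonneg (p0*q0+p1*q1)]
    have hmul : (p0^2+p1^2)*(a0*q0+a1*q1) * ((q0^2+q1^2)*(b0*p0+b1*p1))
        ≤ ((p0*a1-p1*a0)*(p0*q1-p1*q0)) * ((b0*q1-b1*q0)*(p0*q1-p1*q0)) :=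
      mul_le_mul hb1 hb2 (by positivity) (by nlinarith [mul_pos hcPA hC])
    have hkey : (a0*q0+a1*q1)*(b0*p0+b1*p1) ≤ (p0*a1-p1*a0)*(b0*q1-b1*q0) := by
      have hc2 : 0 < (p0*q1-p1*q0)^2 := by positivity
      have h3 : (p0*q1-p1*q0)^2 * ((a0*q0+a1*q1)*(b0*p0+b1*p1))
          ≤ (p0*q1-p1*q0)^2 * ((p0*a1-p1*a0)*(b0*q1-b1*q0)) := by
        calc (p0*q1-p1*q0)^2 * ((a0*q0+a1*q1)*(b0*p0+b1*p1))
            ≤ ((p0^2+p1^2)*(q0^2+q1^2)) * ((a0*q0+a1*q1)*(b0*p0+b1*p1)) := by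
              apply mul_le_mul_of_nonneg_right hCS (by positivity)
          _ = (p0^2+p1^2)*(a0*q0+a1*q1) * ((q0^2+q1^2)*(b0*p0+b1*p1)) := by ring
          _ ≤ ((p0*a1-p1*a0)*(p0*q1-p1*q0)) * ((b0*q1-b1*q0)*(p0*q1-p1*q0)) := hmul
          _ = (p0*q1-p1*q0)^2 * ((p0*a1-p1*a0)*(b0*q1-b1*q0)) := by ring
      exact le_of_mul_le_mul_left h3 hc2
    have hid2 : (a0*b0+a1*b1)*(p0*q0+p1*q1)
        = (a0*q0+a1*q1)*(b0*p0+b1*p1) - (p0*a1-p1*a0)*(b0*q1-b1*q0) := by ring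
    have h4 : (a0*b0+a1*b1)*(p0*q0+p1*q1) ≤ 0*(p0*q0+p1*q1) := by
      rw [zero_mul]; linarith [hid2, hkey]
    exact le_of_mul_le_mul_right h4 hPQ

lemma aux_key (p0 p1 q0 q1 a0 a1 b0 b1 : ℝ)
    (hPQ : 0 < p0*q0+p1*q1) (hAP : a0*p0+a1*p1 ≤ 0) (hAQ : 0 < a0*q0+a1*q1)
    (hBP : 0 < b0*p0+b1*p1) (hBQ : b0*q0+b1*q1 ≤ 0) : a0*b0+a1*b1 ≤ 0 := by
  rcases le_or_gt 0 (p0*q1 - p1*q0) with h | h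
  · exact aux_key' p0 p1 q0 q1 a0 a1 b0 b1 h hPQ hAP hAQ hBP hBQ
  · have := aux_key' q0 q1 p0 p1 b0 b1 a0 a1 (by linarith) (by linarith)
      (by linarith) (by linarith) (by linarith) (by linarith)
    linarith

/-- The two-dimensional cone lemma, stated with inner products. -/
lemma plane_inner_key (Pv Qv Av Bv : Plane)
    (hPQ : 0 < ⟪Pv, Qv⟫) (hAP : ⟪Av, Pv⟫ ≤ 0) (hAQ : 0 < ⟪Av, Qv⟫)
    (hBP : 0 < ⟪Bv, Pv⟫) (hBQ : ⟪Bv, Qv⟫ ≤ 0) : ⟪Av, Bv⟫ ≤ 0 := by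
  have hin : ∀ x y : Plane, ⟪x, y⟫ = x 0 * y 0 + x 1 * y 1 := by
    intro x y
    simp [PiLp.inner_apply, Fin.sum_univ_two, RCLike.inner_apply, mul_comm]
  rw [hin] at hPQ hAP hAQ hBP hBQ ⊢
  exact aux_key (Pv 0) (Pv 1) (Qv 0) (Qv 1) (Av 0) (Av 1) (Bv 0) (Bv 1) hPQ hAP hAQ hBP hBQ

/-- Support point of the smallest enclosing circle in any closed half plane
through the center. -/
lemma sec_support (P : Finset Plane) (hne : P.Nonempty) (c : Plane) (r : ℝ)
    (hcover : ∀ p ∈ P, dist p c ≤ r)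
    (hmin : ∀ (c' : Plane) (r' : ℝ), (∀ p ∈ P, dist p c' ≤ r') → r ≤ r')
    (u : Plane) (hu : u ≠ 0) :
    ∃ x ∈ P, dist x c = r ∧ ⟪x - c, u⟫ ≤ 0 := by
  by_contra hcon
  push_neg at hcon
  have hun : 0 < ‖u‖ := norm_pos_iff.mpr hu
  set g : Plane → ℝ := fun x =>
    if 0 < ⟪x - c, u⟫ then ⟪x - c, u⟫ / ‖u‖ ^ 2 else (r - dist x c) / ‖u‖ with hg
  have hgpos : ∀ x ∈ P, 0 < g x := by
    intro x hx
    by_cases h : 0 < ⟪x - c, u⟫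
    · rw [hg]; simp only [if_pos h]; positivity
    · have hlt : dist x c < r :=
        lt_of_le_of_ne (hcover x hx) (fun he => h (hcon x hx he))
      rw [hg]; simp only [if_neg h]
      have : 0 < r - dist x c := by linarith
      positivity
  set t := (P.inf' hne g) / 2 with ht
  have htpos : 0 < t := by
    have : 0 < P.inf' hne g := (Finset.lt_inf'_iff hne).mpr hgpos
    rw [ht]; linarith
  have htlt : ∀ x ∈ P, t < g x := by
    intro x hx
    have h1 : P.inf' hne g ≤ g x := Finset.inf'_le _ hx
    have h2 : 0 < P.inf' hne g := (Finset.lt_inf'_iff hne).mpr hgpos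
    rw [ht]; linarith
  have hdist : ∀ x ∈ P, dist x (c + t • u) < r := by
    intro x hx
    have hr0 : 0 ≤ r := le_trans dist_nonneg (hcover x hx)
    by_cases h : 0 < ⟪x - c, u⟫
    · have hgx : t < (if 0 < ⟪x - c, u⟫ then ⟪x - c, u⟫ / ‖u‖ ^ 2
          else (r - dist x c) / ‖u‖) := htlt x hx
      rw [if_pos h] at hgx
      have hiu : t * ‖u‖ ^ 2 < ⟪x - c, u⟫ :=
        (lt_div_iff₀ (by positivity)).mp hgx
      have hxc : ‖x - c‖ ≤ r := by rw [← dist_eq_norm]; exact hcover x hx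
      have hsq : dist x (c + t • u) ^ 2 < r ^ 2 := by
        rw [dist_eq_norm, show x - (c + t • u) = (x - c) - t • u by abel]
        rw [norm_sub_sq_real, real_inner_smul_right, norm_smul]
        have h1 : ‖x - c‖ ^ 2 ≤ r ^ 2 := by nlinarith [norm_nonneg (x - c)]
        have h2 : (‖t‖ * ‖u‖) ^ 2 = t ^ 2 * ‖u‖ ^ 2 := by
          rw [Real.norm_eq_abs]; ring_nf; rw [sq_abs]; ring
        rw [h2]
        nlinarith [hiu, htpos]
      nlinarith [dist_nonneg (x := x) (y := c + t • u), hsq, hr0]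
    · have hlt : dist x c < r :=
        lt_of_le_of_ne (hcover x hx) (fun he => h (hcon x hx he))
      have hgx : t < (if 0 < ⟪x - c, u⟫ then ⟪x - c, u⟫ / ‖u‖ ^ 2
          else (r - dist x c) / ‖u‖) := htlt x hx
      rw [if_neg h] at hgx
      have h3 : t * ‖u‖ < r - dist x c := (lt_div_iff₀ hun).mp hgx
      calc dist x (c + t • u) ≤ dist x c + dist c (c + t • u) := dist_triangle _ _ _
        _ = dist x c + ‖t • u‖ := by rw [dist_self_add_right]
        _ = dist x c + t * ‖u‖ := by
            rw [norm_smul, Real.norm_eq_abs, abs_of_pos htpos]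
        _ < r := by linarith
  have hr' : P.sup' hne (fun x => dist x (c + t • u)) < r :=
    (Finset.sup'_lt_iff hne).mpr hdist
  have := hmin (c + t • u) (P.sup' hne (fun x => dist x (c + t • u)))
    (fun p hp => Finset.le_sup' (fun x => dist x (c + t • u)) hp)
  linarith

/-- Every vertex reaches `p` or `q` after deleting the edge `pq`. -/
lemma reach_split {V : Type*} {T : SimpleGraph V} {p q : V} {v z : V} (w : T.Walk v z)
    (hz : z = p) :
    (T.deleteEdges {s(p,q)}).Reachable v p ∨ (T.deleteEdges {s(p,q)}).Reachable v q := by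
  induction w with
  | nil => subst hz; exact Or.inl (SimpleGraph.Reachable.refl _)
  | @cons a b _ hab _ ih =>
    by_cases he : s(a, b) = s(p, q)
    · rw [Sym2.eq_iff] at he
      rcases he with ⟨rfl, rfl⟩ | ⟨rfl, rfl⟩
      · exact Or.inl (SimpleGraph.Reachable.refl _)
      · exact Or.inr (SimpleGraph.Reachable.refl _)
    · have hadj : (T.deleteEdges {s(p,q)}).Adj a b := by
        rw [SimpleGraph.deleteEdges_adj]
        exact ⟨hab, by simpa using he⟩
      rcases ih hz with h | h
      · exact Or.inl (hadj.reachable.trans h)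
      · exact Or.inr (hadj.reachable.trans h)

lemma not_reach {V : Type*} {T : SimpleGraph V} (hacy : T.IsAcyclic) {p q : V}
    (hpq : T.Adj p q) : ¬ (T.deleteEdges {s(p,q)}).Reachable p q := by
  have hb := (SimpleGraph.isAcyclic_iff_forall_edge_isBridge.mp hacy) (T.mem_edgeSet.mpr hpq)
  rw [SimpleGraph.isBridge_iff] at hb
  exact hb

/-- The exchange property of maximum spanning trees. -/
lemma exchange {P : Finset Plane} {T : SimpleGraph P} (hT : IsMaxSpanningTree T)
    {p q : P} (hpq : T.Adj p q) {x y : P}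
    (hx : (T.deleteEdges {s(p,q)}).Reachable x p)
    (hy : (T.deleteEdges {s(p,q)}).Reachable y q) :
    dist (x : Plane) (y : Plane) ≤ dist (p : Plane) (q : Plane) := by
  obtain ⟨hconn, hacy, hmax⟩ := hT
  have hbr : ¬ (T.deleteEdges {s(p,q)}).Reachable p q := not_reach hacy hpq
  by_cases hxyeq : x = y
  · subst hxyeq; rw [dist_self]; exact dist_nonneg
  by_cases hfe : s(x,y) = s(p,q)
  · rw [Sym2.eq_iff] at hfe
    rcases hfe with ⟨rfl, rfl⟩ | ⟨rfl, rfl⟩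
    · exact le_refl _
    · rw [dist_comm]
  have hnadj : ¬ T.Adj x y := by
    intro hadj
    have hD : (T.deleteEdges {s(p,q)}).Adj x y := by
      rw [SimpleGraph.deleteEdges_adj]; exact ⟨hadj, by simpa using hfe⟩
    exact hbr (hx.symm.trans (hD.reachable.trans hy))
  set T' : SimpleGraph P := T.deleteEdges {s(p,q)} ⊔ SimpleGraph.fromEdgeSet {s(x,y)} with hT'
  have hDle : T.deleteEdges {s(p,q)} ≤ T' := le_sup_left
  have hadjxy : T'.Adj x y := by
    rw [hT', SimpleGraph.sup_adj]
    exact Or.inr ((SimpleGraph.fromEdgeSet_adj _).mpr ⟨rfl, hxyeq⟩)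
  have hkey : ∀ v : P, T'.Reachable v x := by
    intro v
    rcases reach_split (q := q) (hconn.preconnected v p).some rfl with h | h
    · exact (h.mono hDle).trans ((hx.mono hDle).symm)
    · exact (h.mono hDle).trans (((hy.mono hDle).symm).trans hadjxy.symm.reachable)
  have hconn' : T'.Connected := by
    rw [SimpleGraph.connected_iff]
    exact ⟨fun u v => (hkey u).trans (hkey v).symm, hconn.nonempty⟩
  have hacy' : T'.IsAcyclic := by
    intro u w hw
    by_cases hf : s(x,y) ∈ w.edges
    · have hre := (SimpleGraph.adj_and_reachable_delete_edges_iff_exists_cycle.mpr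
        ⟨u, w, hw, hf⟩).2
      have hle : (T' \ SimpleGraph.fromEdgeSet {s(x,y)}) ≤ T.deleteEdges {s(p,q)} := by
        intro a b hab
        rw [SimpleGraph.sdiff_adj] at hab
        rcases (SimpleGraph.sup_adj _ _ _ _).mp (hT' ▸ hab.1) with h | h
        · exact h
        · exact absurd h hab.2
      exact hbr (hx.symm.trans (((hre.mono hle).trans hy)))
    · have hsub : ∀ e ∈ w.edges, e ∈ T.edgeSet := by
        intro e he
        have hmem : e ∈ T'.edgeSet := w.edges_subset_edgeSet he
        rw [hT', SimpleGraph.edgeSet_sup, SimpleGraph.edgeSet_deleteEdges,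
          SimpleGraph.edgeSet_fromEdgeSet] at hmem
        rcases hmem with h | h
        · exact h.1
        · exact absurd (h.1 ▸ he) hf
      exact hacy (w.transfer T hsub) (hw.transfer hsub)
  have hfE : s(x,y) ∉ T.edgeSet := fun h => hnadj (T.mem_edgeSet.mp h)
  have hemem : s(p,q) ∈ T.edgeFinset := by
    rw [SimpleGraph.mem_edgeFinset]; exact T.mem_edgeSet.mpr hpq
  have hfnot : s(x,y) ∉ T.edgeFinset.erase (s(p,q)) := by
    intro hmem
    exact hfE (SimpleGraph.mem_edgeFinset.mp (Finset.mem_of_mem_erase hmem))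
  have hwt : edgeWeight T' = dist (x : Plane) (y : Plane)
      + (edgeWeight T - dist (p : Plane) (q : Plane)) := by
    unfold edgeWeight
    refine Eq.trans (Finset.sum_congr
      (show _ = insert (s(x,y)) (T.edgeFinset.erase (s(p,q))) from ?_) (fun _ _ => rfl)) ?_
    · ext e
      simp only [SimpleGraph.mem_edgeFinset, Finset.mem_insert, Finset.mem_erase, hT',
        SimpleGraph.edgeSet_sup, SimpleGraph.edgeSet_deleteEdges, SimpleGraph.edgeSet_fromEdgeSet,
        Set.mem_union, Set.mem_diff, Set.mem_singleton_iff]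
      constructor
      · rintro (⟨he, hne⟩ | ⟨he, _⟩)
        · exact Or.inr ⟨hne, he⟩
        · exact Or.inl he
      · rintro (rfl | ⟨hne, he⟩)
        · exact Or.inr ⟨rfl, by simp [Sym2.mk_isDiag_iff, hxyeq]⟩
        · exact Or.inl ⟨he, hne⟩
    · rw [Finset.sum_insert hfnot]
      have h5 := Finset.sum_erase_add T.edgeFinset
        (fun e => Sym2.lift ⟨fun (a b : ↥P) => dist (a : Plane) (b : Plane),
          fun _ _ => dist_comm _ _⟩ e) hemem
      simp only [Sym2.lift_mk] at h5 ⊢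
      linarith [h5]
  have hle := hmax T' hconn' hacy'
  rw [hwt] at hle
  linarith

end Aux

set_option maxHeartbeats 1000000 in
/-- If `P` is a finite set of at least two points in the plane, `T` is a
maximum-weight spanning tree of `P`, and `c` is the center of the smallest enclosing
circle of `P` (with radius `r`), then for every edge `(p, q)` of `T` the point `c`
lies in the closed diametral disk of `(p, q)`; in particular all these diametral
disks have a common point. -/
theorem pierce_diametral_disks_of_maxSpanningTree
    (P : Finset Plane) (hP : 2 ≤ P.card)
    (T : SimpleGraph P) (hT : IsMaxSpanningTree T)
    (c : Plane) (r : ℝ)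
    (hcover : ∀ p ∈ P, dist p c ≤ r)
    (hmin : ∀ (c' : Plane) (r' : ℝ), (∀ p ∈ P, dist p c' ≤ r') → r ≤ r') :
    (∀ p q : P, T.Adj p q →
      c ∈ Metric.closedBall (midpoint ℝ (p : Plane) (q : Plane))
        (dist (p : Plane) (q : Plane) / 2)) ∧
    ∃ x : Plane, ∀ p q : P, T.Adj p q →
      x ∈ Metric.closedBall (midpoint ℝ (p : Plane) (q : Plane))
        (dist (p : Plane) (q : Plane) / 2) := by
  have hne : P.Nonempty := Finset.card_pos.mp (by omega)
  have expand : ∀ u v : Plane,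
      dist u v ^ 2 = ‖u - c‖ ^ 2 - 2 * ⟪u - c, v - c⟫ + ‖v - c‖ ^ 2 := by
    intro u v
    rw [dist_eq_norm, show u - v = (u - c) - (v - c) by abel, norm_sub_sq_real]
  have key : ∀ p q : P, T.Adj p q → ⟪(p : Plane) - c, (q : Plane) - c⟫ ≤ 0 := by
    intro p q hpq
    by_contra hcon
    push_neg at hcon
    have hp0 : (p : Plane) - c ≠ 0 := by
      intro h; rw [h, inner_zero_left] at hcon; exact lt_irrefl 0 hcon
    have hq0 : (q : Plane) - c ≠ 0 := by
      intro h; rw [h, inner_zero_right] at hcon; exact lt_irrefl 0 hcon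
    obtain ⟨a, haP, har, haip⟩ := sec_support P hne c r hcover hmin ((p : Plane) - c) hp0
    obtain ⟨b, hbP, hbr', hbiq⟩ := sec_support P hne c r hcover hmin ((q : Plane) - c) hq0
    have hrp : dist (p : Plane) c ≤ r := hcover _ p.2
    have hrq : dist (q : Plane) c ≤ r := hcover _ q.2
    have hr0 : 0 ≤ r := le_trans dist_nonneg hrp
    have hnp : ‖(p : Plane) - c‖ ≤ r := by rw [← dist_eq_norm]; exact hrp
    have hnq : ‖(q : Plane) - c‖ ≤ r := by rw [← dist_eq_norm]; exact hrq
    have hna : ‖a - c‖ = r := by rw [← dist_eq_norm]; exact har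
    have hnb : ‖b - c‖ = r := by rw [← dist_eq_norm]; exact hbr'
    have hnp0 : 0 ≤ ‖(p : Plane) - c‖ := norm_nonneg _
    have hnq0 : 0 ≤ ‖(q : Plane) - c‖ := norm_nonneg _
    have hdpq : dist (p : Plane) (q : Plane) ^ 2
        < ‖(p : Plane) - c‖ ^ 2 + ‖(q : Plane) - c‖ ^ 2 := by
      rw [expand]; nlinarith [hcon]
    set a' : ↥P := ⟨a, haP⟩ with ha'
    set b' : ↥P := ⟨b, hbP⟩ with hb'
    have hbrpq : ¬ (T.deleteEdges {s(p,q)}).Reachable p q := not_reach hT.2.1 hpq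
    -- any point far from p is in p's component, etc.
    have hRp : ∀ z : ↥P, dist (p : Plane) (q : Plane) < dist (z : Plane) (p : Plane) →
        (T.deleteEdges {s(p,q)}).Reachable z p := by
      intro z hz
      rcases reach_split (q := q) (hT.1.preconnected z p).some rfl with h | h
      · exact h
      · exfalso
        have := exchange hT hpq (SimpleGraph.Reachable.refl p) h
        rw [dist_comm] at this
        linarith
    have hRq : ∀ z : ↥P, dist (p : Plane) (q : Plane) < dist (z : Plane) (q : Plane) →
        (T.deleteEdges {s(p,q)}).Reachable z q := by
      intro z hz
      rcases reach_split (q := q) (hT.1.preconnected z p).some rfl with h | h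
      · exfalso
        have := exchange hT hpq h (SimpleGraph.Reachable.refl q)
        linarith
      · exact h
    -- a is far from p
    have hap : dist (p : Plane) (q : Plane) < dist a (p : Plane) := by
      have h1 : dist (p : Plane) (q : Plane) ^ 2 < dist a (p : Plane) ^ 2 := by
        rw [expand a (p : Plane)]
        nlinarith [haip, hdpq, hna, hnq]
      exact lt_of_pow_lt_pow_left₀ 2 dist_nonneg h1
    have hbq : dist (p : Plane) (q : Plane) < dist b (q : Plane) := by
      have h1 : dist (p : Plane) (q : Plane) ^ 2 < dist b (q : Plane) ^ 2 := by
        rw [expand b (q : Plane)]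
        nlinarith [hbiq, hdpq, hnb, hnp]
      exact lt_of_pow_lt_pow_left₀ 2 dist_nonneg h1
    have hRa : (T.deleteEdges {s(p,q)}).Reachable a' p := hRp a' hap
    have hRb : (T.deleteEdges {s(p,q)}).Reachable b' q := hRq b' hbq
    rcases le_or_gt ⟪a - c, (q : Plane) - c⟫ 0 with haq | haq
    · -- a is also far from q
      have haq' : dist (p : Plane) (q : Plane) < dist a (q : Plane) := by
        have h1 : dist (p : Plane) (q : Plane) ^ 2 < dist a (q : Plane) ^ 2 := by
          rw [expand a (q : Plane)]
          nlinarith [haq, hdpq, hna, hnp]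
        exact lt_of_pow_lt_pow_left₀ 2 dist_nonneg h1
      exact hbrpq (hRa.symm.trans (hRq a' haq'))
    · rcases le_or_gt ⟪b - c, (p : Plane) - c⟫ 0 with hbp | hbp
      · have hbp' : dist (p : Plane) (q : Plane) < dist b (p : Plane) := by
          have h1 : dist (p : Plane) (q : Plane) ^ 2 < dist b (p : Plane) ^ 2 := by
            rw [expand b (p : Plane)]
            nlinarith [hbp, hdpq, hnb, hnq]
          exact lt_of_pow_lt_pow_left₀ 2 dist_nonneg h1
        exact hbrpq ((hRp b' hbp').symm.trans hRb)
      · have hab : ⟪a - c, b - c⟫ ≤ 0 := by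
          have h1 : 0 < ⟪(p : Plane) - c, (q : Plane) - c⟫ := hcon
          have h2 : ⟪a - c, (p : Plane) - c⟫ ≤ 0 := haip
          have h3 : 0 < ⟪a - c, (q : Plane) - c⟫ := haq
          have h4 : 0 < ⟪b - c, (p : Plane) - c⟫ := hbp
          have h5 : ⟪b - c, (q : Plane) - c⟫ ≤ 0 := hbiq
          exact plane_inner_key ((p : Plane) - c) ((q : Plane) - c) (a - c) (b - c)
            h1 h2 h3 h4 h5
        have habd : dist (p : Plane) (q : Plane) < dist a b := by
          have h1 : dist (p : Plane) (q : Plane) ^ 2 < dist a b ^ 2 := by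
            rw [expand a b]
            nlinarith [hab, hdpq, hna, hnb, hnp, hnq]
          exact lt_of_pow_lt_pow_left₀ 2 dist_nonneg h1
        have := exchange hT hpq hRa hRb
        have hco : dist (a' : Plane) (b' : Plane) = dist a b := rfl
        rw [hco] at this
        linarith
  have mem : ∀ p q : P, T.Adj p q →
      c ∈ Metric.closedBall (midpoint ℝ (p : Plane) (q : Plane))
        (dist (p : Plane) (q : Plane) / 2) := by
    intro p q hpq
    have h := key p q hpq
    rw [Metric.mem_closedBall, dist_eq_norm]
    have hmid : c - midpoint ℝ (p : Plane) (q : Plane)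
        = (1 / 2 : ℝ) • ((c - (p : Plane)) + (c - (q : Plane))) := by
      rw [midpoint_eq_smul_add]
      have h2 : (⅟2 : ℝ) = (1/2 : ℝ) := by norm_num
      rw [h2]
      module
    have e1 := norm_add_sq_real (c - (p : Plane)) (c - (q : Plane))
    have e2 : ‖(p : Plane) - (q : Plane)‖ ^ 2
        = ‖c - (q : Plane)‖ ^ 2 - 2 * ⟪c - (q : Plane), c - (p : Plane)⟫
          + ‖c - (p : Plane)‖ ^ 2 := by
      rw [show (p : Plane) - (q : Plane) = (c - (q : Plane)) - (c - (p : Plane)) by abel,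
        norm_sub_sq_real]
    have hinner : ⟪c - (p : Plane), c - (q : Plane)⟫
        = ⟪(p : Plane) - c, (q : Plane) - c⟫ := by
      rw [show c - (p : Plane) = -((p : Plane) - c) by abel,
        show c - (q : Plane) = -((q : Plane) - c) by abel, inner_neg_neg]
    have hinner2 : ⟪c - (q : Plane), c - (p : Plane)⟫
        = ⟪c - (p : Plane), c - (q : Plane)⟫ := real_inner_comm _ _
    have hle : ‖(c - (p : Plane)) + (c - (q : Plane))‖ ^ 2
        ≤ ‖(p : Plane) - (q : Plane)‖ ^ 2 := by
      rw [e1, e2]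
      linarith [hinner, hinner2, h]
    rw [hmid, norm_smul, Real.norm_eq_abs, show |(1/2 : ℝ)| = 1/2 by norm_num,
      dist_eq_norm]
    nlinarith [hle, norm_nonneg ((c - (p : Plane)) + (c - (q : Plane))),
      norm_nonneg ((p : Plane) - (q : Plane))]
  exact ⟨mem, c, mem⟩
end

section
/- Let P be a finite set of at least two points in the Euclidean plane, let T be a maximum-weight spanning tree of P, and let c* be the center of the smallest enclosing circle of P. Then for every edge (p,q) of T with p ≠ c* and q ≠ c*, the angle ∠p c* q is at least π/2. -/
open scoped Classical

/- ## Auxiliary lemmas -/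

/-- Planar sign contradiction: in the plane there are no four vectors `a, b, u, v` with
all of `⟪a,b⟫, ⟪u,b⟫, ⟪v,a⟫, ⟪u,v⟫` positive while `⟪u,a⟫ ≤ 0` and `⟪v,b⟫ ≤ 0`. -/
lemma aux_planar (a1 a2 b1 b2 u1 u2 v1 v2 : ℝ)
    (hab : 0 < a1*b1 + a2*b2)
    (hub : 0 < u1*b1 + u2*b2)
    (hva : 0 < v1*a1 + v2*a2)
    (huv : 0 < u1*v1 + u2*v2)
    (hua : u1*a1 + u2*a2 ≤ 0)
    (hvb : v1*b1 + v2*b2 ≤ 0) : False := by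
  have hbb : (0:ℝ) ≤ b1*b1 + b2*b2 := by nlinarith [mul_self_nonneg b1, mul_self_nonneg b2]
  have haa : 0 < a1*a1 + a2*a2 := by
    rcases lt_or_eq_of_le (by nlinarith [mul_self_nonneg a1, mul_self_nonneg a2] :
        (0:ℝ) ≤ a1*a1 + a2*a2) with h|h
    · exact h
    · have h1 : a1 = 0 := by nlinarith [mul_self_nonneg a1, mul_self_nonneg a2]
      have h2 : a2 = 0 := by nlinarith [mul_self_nonneg a1, mul_self_nonneg a2]
      rw [h1, h2] at hab; simp at hab
  set W := a1*b2 - a2*b1 with hW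
  rcases eq_or_ne W 0 with h0 | h0
  · have key : (u1*a1+u2*a2) * (b1*b1+b2*b2) - (u1*b1+u2*b2)*(a1*b1+a2*b2)
        = (u1*b2 - u2*b1) * W := by rw [hW]; ring
    rw [h0, mul_zero, sub_eq_zero] at key
    nlinarith [mul_pos hub hab, mul_nonneg (neg_nonneg.2 hua) hbb]
  · have hW2 : 0 < W^2 := by positivity
    set A2 := (v1*b2 - v2*b1) * W with hA2def
    set B2 := (a1*v2 - a2*v1) * W with hB2def
    have e1 : (v1*a1+v2*a2) * W^2 = A2*(a1*a1+a2*a2) + B2*(a1*b1+a2*b2) := by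
      rw [hA2def, hB2def, hW]; ring
    have e2 : (v1*b1+v2*b2) * W^2 = A2*(a1*b1+a2*b2) + B2*(b1*b1+b2*b2) := by
      rw [hA2def, hB2def, hW]; ring
    have e3 : (u1*v1+u2*v2) * W^2 = A2*(u1*a1+u2*a2) + B2*(u1*b1+u2*b2) := by
      rw [hA2def, hB2def, hW]; ring
    have lagrange : (a1*b1+a2*b2)^2 + W^2 = (a1*a1+a2*a2)*(b1*b1+b2*b2) := by
      rw [hW]; ring
    have hf1 : 0 < A2*(a1*a1+a2*a2) + B2*(a1*b1+a2*b2) := by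
      rw [← e1]; positivity
    have hf2 : A2*(a1*b1+a2*b2) + B2*(b1*b1+b2*b2) ≤ 0 := by
      rw [← e2]; exact mul_nonpos_of_nonpos_of_nonneg hvb (le_of_lt hW2)
    have hf3 : 0 < A2*(u1*a1+u2*a2) + B2*(u1*b1+u2*b2) := by
      rw [← e3]; positivity
    have hB2 : B2 < 0 := by
      nlinarith [mul_pos hf1 hab, mul_nonneg (neg_nonneg.2 hf2) (le_of_lt haa)]
    have hA2ua : 0 < A2*(u1*a1+u2*a2) := by
      nlinarith [mul_pos (neg_pos.2 hB2) hub]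
    have hA2 : A2 < 0 := by
      rcases le_or_gt 0 A2 with h | h
      · have := mul_nonpos_of_nonneg_of_nonpos h hua; linarith
      · exact h
    have t1 : A2*(a1*a1+a2*a2) < 0 := mul_neg_of_neg_of_pos hA2 haa
    have t2 : B2*(a1*b1+a2*b2) < 0 := mul_neg_of_neg_of_pos hB2 hab
    linarith

/-- For the smallest enclosing circle and any direction `u`, there is a point of `P`
on the circle lying in the closed half-plane `⟪s - c, u⟫ ≤ 0`. -/
lemma exists_opposite_point (P : Finset Plane) (hne : P.Nonempty) (c : Plane) (r : ℝ)
    (hcover : ∀ p ∈ P, dist p c ≤ r)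
    (hmin : ∀ (c' : Plane) (r' : ℝ), (∀ p ∈ P, dist p c' ≤ r') → r ≤ r')
    (u : Plane) :
    ∃ s ∈ P, dist s c = r ∧ (inner ℝ (s - c) u : ℝ) ≤ 0 := by
  by_contra hcon
  push_neg at hcon
  set δ : Plane → ℝ := fun s =>
    if dist s c = r then (inner ℝ (s - c) u : ℝ) / (‖u‖^2 + 1) else (r - dist s c) / (‖u‖ + 1)
    with hδ
  have hδpos : ∀ s ∈ P, 0 < δ s := by
    intro s hs
    by_cases h : dist s c = r
    · have := hcon s hs h
      simp only [hδ, if_pos h]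
      positivity
    · have h2 : dist s c < r := lt_of_le_of_ne (hcover s hs) h
      simp only [hδ, if_neg h]
      have : 0 < r - dist s c := by linarith
      positivity
  set ε : ℝ := P.inf' hne δ with hε
  have hεpos : 0 < ε := by
    rw [hε, Finset.lt_inf'_iff]
    exact fun s hs => hδpos s hs
  have hkey : ∀ s ∈ P, dist s (c + ε • u) < r := by
    intro s hs
    have hεs : ε ≤ δ s := Finset.inf'_le _ hs
    by_cases h : dist s c = r
    · have hI : 0 < (inner ℝ (s - c) u : ℝ) := hcon s hs h
      have hb : ε * (‖u‖^2 + 1) ≤ (inner ℝ (s - c) u : ℝ) := by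
        have hd : δ s = (inner ℝ (s - c) u : ℝ) / (‖u‖^2 + 1) := by simp only [hδ, if_pos h]
        rw [hd] at hεs
        have hpos : (0:ℝ) < ‖u‖^2 + 1 := by positivity
        calc ε * (‖u‖^2 + 1) ≤ ((inner ℝ (s - c) u : ℝ) / (‖u‖^2 + 1)) * (‖u‖^2 + 1) :=
              mul_le_mul_of_nonneg_right hεs (le_of_lt hpos)
          _ = (inner ℝ (s - c) u : ℝ) := by field_simp
      have hr : 0 ≤ r := le_trans dist_nonneg (hcover s hs)
      have hsq : dist s (c + ε • u) ^ 2 < r ^ 2 := by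
        have hd : dist s (c + ε • u) = ‖(s - c) - ε • u‖ := by
          rw [dist_eq_norm]; congr 1; abel
        rw [hd, norm_sub_sq_real]
        have h1 : ‖s - c‖ = r := by rw [← dist_eq_norm]; exact h
        have h2 : (inner ℝ (s - c) (ε • u) : ℝ) = ε * (inner ℝ (s - c) u : ℝ) :=
          real_inner_smul_right _ _ _
        have h3 : ‖ε • u‖^2 = ε^2 * ‖u‖^2 := by
          rw [norm_smul]; simp [abs_of_pos hεpos]; ring
        rw [h1, h2, h3]
        nlinarith [mul_pos hεpos hI, sq_nonneg ε]
      exact lt_of_pow_lt_pow_left₀ 2 hr hsq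
    · have h2 : dist s c < r := lt_of_le_of_ne (hcover s hs) h
      have hδs : δ s = (r - dist s c) / (‖u‖ + 1) := by simp only [hδ, if_neg h]
      have hun : (0:ℝ) < ‖u‖ + 1 := by positivity
      have hεu : ε * ‖u‖ < r - dist s c := by
        have h4 : ε * ‖u‖ < ε * (‖u‖ + 1) := by nlinarith
        have h5 : ε * (‖u‖ + 1) ≤ ((r - dist s c)/(‖u‖+1)) * (‖u‖ + 1) := by
          rw [hδs] at hεs
          exact mul_le_mul_of_nonneg_right hεs (le_of_lt hun)
        have h6 : ((r - dist s c)/(‖u‖+1)) * (‖u‖ + 1) = r - dist s c := by field_simp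
        linarith
      calc dist s (c + ε • u) ≤ dist s c + dist c (c + ε • u) := dist_triangle _ _ _
        _ = dist s c + ε * ‖u‖ := by
            rw [dist_self_add_right, norm_smul, Real.norm_eq_abs, abs_of_pos hεpos]
        _ < r := by linarith
  set r' : ℝ := P.sup' hne (fun s => dist s (c + ε • u)) with hr'
  have h1 : r ≤ r' :=
    hmin (c + ε • u) r' (fun p hp => Finset.le_sup' (fun s => dist s (c + ε • u)) hp)
  have h2 : r' < r := by
    rw [hr', Finset.sup'_lt_iff]
    exact fun s hs => hkey s hs
  linarith

lemma edgeWeight_eq_sum {P : Finset Plane} (G : SimpleGraph P) (s : Finset (Sym2 P))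
    (h : ∀ e, e ∈ s ↔ e ∈ G.edgeSet) :
    edgeWeight G = ∑ e ∈ s,
      Sym2.lift ⟨fun (a b : P) => dist (a : Plane) (b : Plane), fun _ _ => dist_comm _ _⟩ e := by
  unfold edgeWeight
  refine Finset.sum_congr ?_ (fun _ _ => rfl)
  ext e
  rw [SimpleGraph.mem_edgeFinset, h]

open SimpleGraph in
/-- The exchange property of a maximum spanning tree: removing an edge `pq` splits the
tree into the component of `p` and the component of `q`, and any vertex pair crossing
the split is at distance at most `dist p q`. -/
lemma tree_exchange {P : Finset Plane} (T : SimpleGraph P)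
    (hT : IsMaxSpanningTree T) (p q : P) (hadj : T.Adj p q) :
    (∀ v : P, (T.deleteEdges {s(p,q)}).Reachable p v ∨ (T.deleteEdges {s(p,q)}).Reachable q v)
    ∧ ¬ (T.deleteEdges {s(p,q)}).Reachable p q
    ∧ ∀ x y : P, (T.deleteEdges {s(p,q)}).Reachable p x →
        (T.deleteEdges {s(p,q)}).Reachable q y →
        dist (x:Plane) (y:Plane) ≤ dist (p:Plane) (q:Plane) := by
  set G' : SimpleGraph P := T.deleteEdges {s(p,q)} with hG'
  have hG'le : G' ≤ T := SimpleGraph.deleteEdges_le _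
  have hnr : ¬ G'.Reachable p q := by
    have hb := (isAcyclic_iff_forall_adj_isBridge.mp hT.2.1) hadj
    exact isBridge_iff.mp hb
  have compA : ∀ v : P, G'.Reachable p v ∨ G'.Reachable q v := by
    have walkInd : ∀ (u v : P) (w : T.Walk u v),
        (G'.Reachable p u ∨ G'.Reachable q u) → (G'.Reachable p v ∨ G'.Reachable q v) := by
      intro u v w
      induction w with
      | nil => exact id
      | @cons u' b' v' h w ih =>
        intro hu
        apply ih
        by_cases he : s(u', b') = s(p, q)
        · rw [Sym2.eq_iff] at he
          rcases he with ⟨rfl, rfl⟩ | ⟨rfl, rfl⟩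
          · exact Or.inr (Reachable.refl _)
          · exact Or.inl (Reachable.refl _)
        · have hadj' : G'.Adj u' b' := by
            rw [hG', SimpleGraph.deleteEdges_adj]
            exact ⟨h, by simpa using he⟩
          rcases hu with h1 | h1
          · exact Or.inl (h1.trans hadj'.reachable)
          · exact Or.inr (h1.trans hadj'.reachable)
    intro v
    exact walkInd p v (hT.1.preconnected p v).some (Or.inl (Reachable.refl _))
  refine ⟨compA, hnr, ?_⟩
  intro x y hx hy
  by_cases hxyeq : x = p ∧ y = q
  · rcases hxyeq with ⟨rfl, rfl⟩; exact le_refl _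
  have hne : x ≠ y := by
    rintro rfl
    exact hnr (hx.trans hy.symm)
  have hsne : s(x, y) ≠ s(p, q) := by
    intro h
    rcases Sym2.eq_iff.mp h with ⟨rfl, rfl⟩ | ⟨rfl, rfl⟩
    · exact hxyeq ⟨rfl, rfl⟩
    · exact hnr hx
  have hnadj : ¬ T.Adj x y := by
    intro hA
    have hadj' : G'.Adj x y := by
      rw [hG', SimpleGraph.deleteEdges_adj]
      exact ⟨hA, by simpa using hsne⟩
    exact hnr (hx.trans (hadj'.reachable.trans hy.symm))
  have hxyP : s(x, y) ∉ T.edgeSet := fun hmem => hnadj hmem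
  set T' : SimpleGraph P := G' ⊔ SimpleGraph.fromEdgeSet {s(x, y)} with hT'
  have hG'T' : G' ≤ T' := le_sup_left
  have hT'adj : T'.Adj x y := by
    rw [hT', sup_adj, fromEdgeSet_adj]
    exact Or.inr ⟨rfl, hne⟩
  have hT'edge : T'.edgeSet = (T.edgeSet \ {s(p, q)}) ∪ {s(x, y)} := by
    rw [hT', edgeSet_sup, hG', edgeSet_deleteEdges, edgeSet_fromEdgeSet]
    congr 1
    ext e
    simp only [Set.mem_diff, Set.mem_singleton_iff, Set.mem_setOf_eq, and_iff_left_iff_imp]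
    rintro rfl
    simpa using hne
  have hreach : ∀ v : P, T'.Reachable v x := by
    intro v
    rcases compA v with h | h
    · exact (h.mono hG'T').symm.trans (hx.mono hG'T')
    · exact ((h.mono hG'T').symm.trans (hy.mono hG'T')).trans hT'adj.symm.reachable
  have hconn : T'.Connected := by
    haveI : Nonempty ({ x // x ∈ P }) := ⟨p⟩
    exact ⟨fun u v => (hreach u).trans (hreach v).symm⟩
  have hacyc : T'.IsAcyclic := by
    intro v cyc hcyc
    by_cases he : s(x, y) ∈ cyc.edges
    · obtain ⟨-, hreach'⟩ :=
        (adj_and_reachable_delete_edges_iff_exists_cycle (G := T') (v := x) (w := y)).mpr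
          ⟨v, cyc, hcyc, he⟩
      have hEq : T' \ SimpleGraph.fromEdgeSet {s(x, y)} = G' := by
        ext u v
        simp only [sdiff_adj, hT', sup_adj]
        constructor
        · rintro ⟨h1 | h1, h2⟩
          · exact h1
          · exact absurd h1 h2
        · intro h
          refine ⟨Or.inl h, fun hf => ?_⟩
          rw [fromEdgeSet_adj, Set.mem_singleton_iff] at hf
          rcases Sym2.eq_iff.mp hf.1 with ⟨rfl, rfl⟩ | ⟨rfl, rfl⟩
          · exact hnadj (hG'le h)
          · exact hnadj (hG'le h.symm)
      rw [SimpleGraph.deleteEdges, hEq] at hreach'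
      exact hnr (hx.trans (hreach'.trans hy.symm))
    · have hsub : ∀ e ∈ cyc.edges, e ∈ T.edgeSet := by
        intro e hee
        have hmem : e ∈ T'.edgeSet := cyc.edges_subset_edgeSet hee
        rw [hT'edge] at hmem
        rcases hmem with hmem | hmem
        · exact hmem.1
        · rw [Set.mem_singleton_iff] at hmem
          exact absurd (hmem ▸ hee) he
      exact hT.2.1 (cyc.transfer T hsub) (hcyc.transfer hsub)
  set F : Sym2 ({ x // x ∈ P }) → ℝ :=
    Sym2.lift ⟨fun (a b : { x // x ∈ P }) => dist (a : Plane) (b : Plane),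
      fun _ _ => dist_comm _ _⟩ with hF
  set E : Finset (Sym2 ({ x // x ∈ P })) := Finset.univ.filter (fun e => e ∈ T.edgeSet) with hE
  have hmemE : ∀ e, e ∈ E ↔ e ∈ T.edgeSet := by
    intro e; simp [hE]
  have hwT : edgeWeight T = ∑ e ∈ E, F e := edgeWeight_eq_sum T E hmemE
  have hepq : s(p, q) ∈ E := (hmemE _).mpr hadj
  have hnotin : s(x, y) ∉ E.erase (s(p, q)) := by
    intro hmem
    exact hxyP ((hmemE _).mp (Finset.mem_of_mem_erase hmem))
  have hwT' : edgeWeight T' = ∑ e ∈ insert (s(x, y)) (E.erase (s(p, q))), F e := by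
    refine edgeWeight_eq_sum T' _ ?_
    intro e
    rw [hT'edge]
    simp only [Finset.mem_insert, Finset.mem_erase, hmemE, Set.mem_union, Set.mem_diff,
      Set.mem_singleton_iff]
    tauto
  have hsum : ∑ e ∈ insert (s(x, y)) (E.erase (s(p, q))), F e
      = F (s(x, y)) + (∑ e ∈ E, F e - F (s(p, q))) := by
    rw [Finset.sum_insert hnotin, Finset.sum_erase_eq_sub hepq]
  have hle := hT.2.2 T' hconn hacyc
  have hFxy : F (s(x, y)) = dist (x : Plane) (y : Plane) := by rw [hF, Sym2.lift_mk]
  have hFpq : F (s(p, q)) = dist (p : Plane) (q : Plane) := by rw [hF, Sym2.lift_mk]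
  rw [hwT', hsum, hwT] at hle
  rw [hFxy, hFpq] at hle
  linarith

/-- For every edge `(p, q)` of a maximum-weight spanning tree of `P`, with `p` and `q`
distinct from the center `c` of the smallest enclosing circle of `P`, the angle
`∠ p c q` is at least `π / 2`. -/
theorem angle_ge_pi_div_two_of_maxSpanningTree_edge
    (P : Finset Plane) (hP : 2 ≤ P.card)
    (T : SimpleGraph P) (hT : IsMaxSpanningTree T)
    (c : Plane) (r : ℝ)
    (hcover : ∀ p ∈ P, dist p c ≤ r)
    (hmin : ∀ (c' : Plane) (r' : ℝ), (∀ p ∈ P, dist p c' ≤ r') → r ≤ r') :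
    ∀ p q : P, T.Adj p q → (p : Plane) ≠ c → (q : Plane) ≠ c →
      Real.pi / 2 ≤ EuclideanGeometry.angle (p : Plane) c (q : Plane) := by
  intro p q hadj hpc hqc
  by_contra hcon
  push_neg at hcon
  have hPne : P.Nonempty := Finset.card_pos.mp (by omega)
  set a : Plane := (p : Plane) - c with hadef
  set b : Plane := (q : Plane) - c with hbdef
  have ha : a ≠ 0 := sub_ne_zero.mpr hpc
  have hb : b ≠ 0 := sub_ne_zero.mpr hqc
  have hang : EuclideanGeometry.angle (p : Plane) c (q : Plane) =
      InnerProductGeometry.angle a b := by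
    rw [EuclideanGeometry.angle, vsub_eq_sub, vsub_eq_sub]
  rw [hang] at hcon
  have hcos : 0 < Real.cos (InnerProductGeometry.angle a b) := by
    apply Real.cos_pos_of_mem_Ioo
    constructor
    · have := InnerProductGeometry.angle_nonneg a b
      have := Real.pi_pos
      linarith
    · exact hcon
  rw [InnerProductGeometry.cos_angle] at hcos
  have hinner : 0 < (inner ℝ a b : ℝ) := by
    rcases div_pos_iff.mp hcos with ⟨h1, _⟩ | ⟨_, h2⟩
    · exact h1
    · exact absurd h2 (not_lt.mpr (by positivity))
  have hra : ‖a‖ ≤ r := by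
    rw [hadef, ← dist_eq_norm]
    exact hcover _ p.2
  have hrb : ‖b‖ ≤ r := by
    rw [hbdef, ← dist_eq_norm]
    exact hcover _ q.2
  obtain ⟨s1, hs1P, hs1r, hs1i⟩ := exists_opposite_point P hPne c r hcover hmin a
  obtain ⟨s2, hs2P, hs2r, hs2i⟩ := exists_opposite_point P hPne c r hcover hmin b
  set S1 : P := ⟨s1, hs1P⟩ with hS1
  set S2 : P := ⟨s2, hs2P⟩ with hS2
  set u : Plane := s1 - c with hudef
  set v : Plane := s2 - c with hvdef
  have hu : ‖u‖ = r := by rw [hudef, ← dist_eq_norm]; exact hs1r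
  have hv : ‖v‖ = r := by rw [hvdef, ← dist_eq_norm]; exact hs2r
  obtain ⟨compA, hnr, cross⟩ := tree_exchange T hT p q hadj
  -- d² = ‖a‖² + ‖b‖² - 2⟪a,b⟫
  have hdab : dist (p : Plane) (q : Plane) = ‖a - b‖ := by
    rw [dist_eq_norm, hadef, hbdef]; congr 1; abel
  have hd2 : dist (p : Plane) (q : Plane) ^ 2 = ‖a‖^2 - 2*(inner ℝ a b : ℝ) + ‖b‖^2 := by
    rw [hdab, norm_sub_sq_real]
  have hr2a : ‖a‖^2 ≤ r^2 := by nlinarith [norm_nonneg a, hra]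
  have hr2b : ‖b‖^2 ≤ r^2 := by nlinarith [norm_nonneg b, hrb]
  -- distances from s1 to p, s2 to q are large
  have hs1p : dist (p : Plane) (q : Plane) < dist (s1 : Plane) (p : Plane) := by
    apply lt_of_pow_lt_pow_left₀ 2 dist_nonneg
    have h1 : dist (s1 : Plane) (p : Plane) = ‖u - a‖ := by
      rw [dist_eq_norm, hudef, hadef]; congr 1; abel
    rw [h1, norm_sub_sq_real, hd2, hu]
    linarith [hs1i, hinner, hr2b]
  have hs2q : dist (p : Plane) (q : Plane) < dist (s2 : Plane) (q : Plane) := by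
    apply lt_of_pow_lt_pow_left₀ 2 dist_nonneg
    have h1 : dist (s2 : Plane) (q : Plane) = ‖v - b‖ := by
      rw [dist_eq_norm, hvdef, hbdef]; congr 1; abel
    rw [h1, norm_sub_sq_real, hd2, hv]
    linarith [hs2i, hinner, hr2a]
  -- hence s1 is in the p-component, s2 in the q-component
  have h1 : (T.deleteEdges {s(p,q)}).Reachable p S1 := by
    rcases compA S1 with h | h
    · exact h
    · exfalso
      have hc : dist (p : Plane) (s1 : Plane) ≤ dist (p : Plane) (q : Plane) :=
        cross p S1 (SimpleGraph.Reachable.refl _) h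
      rw [dist_comm (p : Plane) (s1 : Plane)] at hc
      linarith
  have h2 : (T.deleteEdges {s(p,q)}).Reachable q S2 := by
    rcases compA S2 with h | h
    · exfalso
      have hc : dist (s2 : Plane) (q : Plane) ≤ dist (p : Plane) (q : Plane) :=
        cross S2 q h (SimpleGraph.Reachable.refl _)
      linarith
    · exact h
  have c1 : dist (s1 : Plane) (q : Plane) ≤ dist (p : Plane) (q : Plane) :=
    cross S1 q h1 (SimpleGraph.Reachable.refl _)
  have c2 : dist (p : Plane) (s2 : Plane) ≤ dist (p : Plane) (q : Plane) :=
    cross p S2 (SimpleGraph.Reachable.refl _) h2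
  have c3 : dist (s1 : Plane) (s2 : Plane) ≤ dist (p : Plane) (q : Plane) :=
    cross S1 S2 h1 h2
  -- convert to inner product inequalities
  have hub : 0 < (inner ℝ u b : ℝ) := by
    have hsq : dist (s1 : Plane) (q : Plane) ^ 2 ≤ dist (p : Plane) (q : Plane) ^ 2 :=
      pow_le_pow_left₀ dist_nonneg c1 2
    have h1' : dist (s1 : Plane) (q : Plane) = ‖u - b‖ := by
      rw [dist_eq_norm, hudef, hbdef]; congr 1; abel
    rw [h1', norm_sub_sq_real, hd2, hu] at hsq
    linarith [hsq, hr2a, hinner]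
  have hva : 0 < (inner ℝ v a : ℝ) := by
    have hsq : dist (p : Plane) (s2 : Plane) ^ 2 ≤ dist (p : Plane) (q : Plane) ^ 2 :=
      pow_le_pow_left₀ dist_nonneg c2 2
    have h1' : dist (p : Plane) (s2 : Plane) = ‖v - a‖ := by
      rw [dist_comm, dist_eq_norm, hvdef, hadef]; congr 1; abel
    rw [h1', norm_sub_sq_real, hd2, hv] at hsq
    linarith [hsq, hr2b, hinner]
  have huv : 0 < (inner ℝ u v : ℝ) := by
    have hsq : dist (s1 : Plane) (s2 : Plane) ^ 2 ≤ dist (p : Plane) (q : Plane) ^ 2 :=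
      pow_le_pow_left₀ dist_nonneg c3 2
    have h1' : dist (s1 : Plane) (s2 : Plane) = ‖u - v‖ := by
      rw [dist_eq_norm, hudef, hvdef]; congr 1; abel
    rw [h1', norm_sub_sq_real, hd2, hu, hv] at hsq
    linarith [hsq, hr2a, hr2b, hinner]
  -- the planar contradiction
  have coord : ∀ x y : Plane, (inner ℝ x y : ℝ) = x 0 * y 0 + x 1 * y 1 := by
    intro x y
    simp [PiLp.inner_apply, RCLike.inner_apply, Fin.sum_univ_two, mul_comm]
  have hua' : u 0 * a 0 + u 1 * a 1 ≤ 0 := by rw [← coord]; exact hs1i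
  have hvb' : v 0 * b 0 + v 1 * b 1 ≤ 0 := by rw [← coord]; exact hs2i
  exact aux_planar (a 0) (a 1) (b 0) (b 1) (u 0) (u 1) (v 0) (v 1)
    (by rw [← coord]; exact hinner)
    (by rw [← coord]; exact hub)
    (by rw [← coord]; exact hva)
    (by rw [← coord]; exact huv)
    hua' hvb'
end

section
/- Let P be a finite set of at least two points in the Euclidean plane, let T be a maximum-weight spanning tree of P, and let c* be the center of the smallest enclosing circle of P. Then for every edge (p,q) of T, |c*p| + |c*q| ≤ √2 · |pq|. In particular, the variant of Fingerhut's conjecture for maximum-weight spanning trees holds with α = √2. -/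
open scoped Classical

open scoped RealInnerProductSpace

/-- In a tree, after deleting the edge `pq`, every vertex can still reach `p` or `q`. -/
private lemma reach_aux {V : Type*} (T : SimpleGraph V) (p q : V) :
    ∀ {v z : V}, T.Walk v z →
      (T.deleteEdges {s(p, q)}).Reachable v z ∨
      (T.deleteEdges {s(p, q)}).Reachable v p ∨
      (T.deleteEdges {s(p, q)}).Reachable v q := by
  intro v z w
  induction w with
  | nil => exact Or.inl (SimpleGraph.Reachable.refl _)
  | @cons a b _ hab _ ih =>
    by_cases he : s(a, b) = s(p, q)
    · rw [Sym2.eq_iff] at he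
      rcases he with ⟨h1, _⟩ | ⟨h1, _⟩
      · subst h1; exact Or.inr (Or.inl (SimpleGraph.Reachable.refl _))
      · subst h1; exact Or.inr (Or.inr (SimpleGraph.Reachable.refl _))
    · have hadj : (T.deleteEdges {s(p, q)}).Adj a b := by
        rw [SimpleGraph.deleteEdges_adj]
        exact ⟨hab, by simpa using he⟩
      rcases ih with h | h | h
      · exact Or.inl (hadj.reachable.trans h)
      · exact Or.inr (Or.inl (hadj.reachable.trans h))
      · exact Or.inr (Or.inr (hadj.reachable.trans h))

/-- The exchange argument: if `pq` is an edge of a maximum spanning tree, `x` is on the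
`p`-side and `y` on the other side, then `|xy| ≤ |pq|`. -/
private lemma cross_dist_le (P : Finset Plane)
    (T : SimpleGraph P) (hT : IsMaxSpanningTree T)
    (p q : P) (hpq : T.Adj p q)
    (x y : P) (hx : (T.deleteEdges {s(p, q)}).Reachable x p)
    (hy : ¬ (T.deleteEdges {s(p, q)}).Reachable y p) :
    dist (x : Plane) (y : Plane) ≤ dist (p : Plane) (q : Plane) := by
  set G := T.deleteEdges {s(p, q)} with hGdef
  by_contra hgt
  push_neg at hgt
  have hxyne : x ≠ y := by
    rintro rfl
    have : (0:ℝ) ≤ dist (p : Plane) (q : Plane) := dist_nonneg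
    simp only [dist_self] at hgt
    linarith
  have hsymne : s(x, y) ≠ s(p, q) := by
    intro h
    rw [Sym2.eq_iff] at h
    rcases h with ⟨h1, h2⟩ | ⟨h1, h2⟩ <;> subst h1 <;> subst h2
    · exact lt_irrefl _ hgt
    · rw [dist_comm (x : Plane) (y : Plane)] at hgt
      exact lt_irrefl _ hgt
  have hxy_not_edge : ¬ T.Adj x y := by
    intro hadj
    have hGxy : G.Adj x y := by
      rw [hGdef, SimpleGraph.deleteEdges_adj]
      exact ⟨hadj, by simpa using hsymne⟩
    exact hy ((hGxy.symm.reachable).trans hx)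
  set T' := G ⊔ SimpleGraph.fromEdgeSet {s(x, y)} with hT'def
  have hT'adjxy : T'.Adj x y := by
    rw [hT'def, SimpleGraph.sup_adj, SimpleGraph.fromEdgeSet_adj]
    exact Or.inr ⟨rfl, hxyne⟩
  have hGle : G ≤ T := SimpleGraph.deleteEdges_le _
  have hGleT' : G ≤ T' := le_sup_left
  -- y reaches q in G
  have hyq : G.Reachable y q := by
    rcases reach_aux T p q ((hT.1.preconnected y p).some) with h | h | h
    · exact absurd h hy
    · exact absurd h hy
    · exact h
  -- connectivity of T'
  have hreach : ∀ v : ↥P, T'.Reachable v p := by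
    intro v
    have hpq' : T'.Reachable q p :=
      ((hyq.mono hGleT').symm.trans ((hT'adjxy.symm.reachable).trans (hx.mono hGleT')))
    rcases reach_aux T p q ((hT.1.preconnected v p).some) with h | h | h
    · exact h.mono hGleT'
    · exact h.mono hGleT'
    · exact (h.mono hGleT').trans hpq'
  have hT'conn : T'.Connected := by
    rw [SimpleGraph.connected_iff]
    exact ⟨fun u v => (hreach u).trans (hreach v).symm, ⟨p⟩⟩
  -- acyclicity of T'
  have hT'acyc : T'.IsAcyclic := by
    intro v C hC
    have hbridge : T'.IsBridge s(x, y) := by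
      rw [SimpleGraph.isBridge_iff]
      intro hre
      have hle : (T'.deleteEdges {s(x, y)}) ≤ G := by
        intro a b hab
        rw [SimpleGraph.deleteEdges_adj, hT'def, SimpleGraph.sup_adj] at hab
        rcases hab with ⟨h1 | h1, h2⟩
        · exact h1
        · exact absurd (by rw [SimpleGraph.fromEdgeSet_adj] at h1; exact h1.1) h2
      exact hy (((hre.mono hle).symm.trans hx))
    have hnotmem := hbridge.notMem_edges_of_isCycle hC
    have hCG : ∀ e ∈ C.edges, e ∈ G.edgeSet := by
      intro e he
      have heT' := C.edges_subset_edgeSet he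
      rw [hT'def, SimpleGraph.edgeSet_sup] at heT'
      rcases heT' with h | h
      · exact h
      · rw [SimpleGraph.edgeSet_fromEdgeSet] at h
        rcases h with ⟨h1, _⟩
        rw [Set.mem_singleton_iff] at h1
        subst h1
        exact absurd he hnotmem
    exact hT.2.1 _ ((hC.transfer hCG).mapLe hGle)
  -- edge finsets
  have hpq_mem : s(p, q) ∈ T.edgeFinset := by
    rw [SimpleGraph.mem_edgeFinset]; exact hpq
  have hxy_notmem : s(x, y) ∉ T.edgeFinset := by
    rw [SimpleGraph.mem_edgeFinset]; exact hxy_not_edge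
  have hmem : ∀ e : Sym2 ↥P, e ∈ T'.edgeSet ↔
      e = s(x, y) ∨ (e ≠ s(p, q) ∧ e ∈ T.edgeSet) := by
    intro e
    constructor
    · intro he
      rw [hT'def, SimpleGraph.edgeSet_sup] at he
      rcases he with h | h
      · rw [hGdef, SimpleGraph.edgeSet_deleteEdges] at h
        exact Or.inr ⟨by simpa using h.2, h.1⟩
      · rw [SimpleGraph.edgeSet_fromEdgeSet] at h
        exact Or.inl (Set.mem_singleton_iff.mp h.1)
    · intro he
      rw [hT'def, SimpleGraph.edgeSet_sup]
      rcases he with h | ⟨h1, h2⟩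
      · subst h
        refine Or.inr ?_
        rw [SimpleGraph.edgeSet_fromEdgeSet]
        exact ⟨rfl, by simp [Sym2.mk_isDiag_iff, hxyne]⟩
      · refine Or.inl ?_
        rw [hGdef, SimpleGraph.edgeSet_deleteEdges]
        exact ⟨h2, by simpa using h1⟩
  -- weights
  have hxy_notmem_erase : s(x, y) ∉ T.edgeFinset.erase s(p, q) :=
    fun h => hxy_notmem (Finset.mem_of_mem_erase h)
  have hw : edgeWeight T' = edgeWeight T - dist (p : Plane) (q : Plane)
      + dist (x : Plane) (y : Plane) := by
    unfold edgeWeight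
    have h1 : ∀ (inst : Fintype T'.edgeSet),
        @SimpleGraph.edgeFinset _ T' inst = insert s(x, y) (T.edgeFinset.erase s(p, q)) := by
      intro inst
      ext e
      rw [SimpleGraph.mem_edgeFinset, Finset.mem_insert, Finset.mem_erase,
        SimpleGraph.mem_edgeFinset, hmem e]
    have h2 : ∀ (inst : Fintype T.edgeSet),
        @SimpleGraph.edgeFinset _ T inst = T.edgeFinset := by
      intro inst
      ext e
      simp only [SimpleGraph.mem_edgeFinset]
    rw [h1, h2, Finset.sum_insert hxy_notmem_erase, Finset.sum_erase_eq_sub hpq_mem]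
    simp only [Sym2.lift_mk]
    ring
  have hle := hT.2.2 T' hT'conn hT'acyc
  rw [hw] at hle
  linarith

/-- If `0 < ⟪w₁, v⟫` on `V₁`, `0 < ⟪w₂, v⟫` on `V₂`, and all cross inner products are
positive, then some vector has positive inner product with everything in `V₁ ∪ V₂`. -/
private lemma exists_inner_pos (V₁ V₂ : Finset Plane) (w₁ w₂ : Plane)
    (h₁ : ∀ v ∈ V₁, 0 < ⟪w₁, v⟫) (h₂ : ∀ v ∈ V₂, 0 < ⟪w₂, v⟫)
    (hx : ∀ x ∈ V₁, ∀ y ∈ V₂, 0 < ⟪x, y⟫) :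
    ∃ u : Plane, ∀ v ∈ V₁ ∪ V₂, 0 < ⟪u, v⟫ := by
  have h0 : (0 : Plane) ∉ convexHull ℝ ((V₁ ∪ V₂ : Finset Plane) : Set Plane) := by
    intro hmem
    rw [Finset.mem_convexHull'] at hmem
    obtain ⟨w, hw0, hw1, hsum⟩ := hmem
    have hunion : V₁ ∪ V₂ = V₁ ∪ (V₂ \ V₁) := by
      rw [Finset.union_sdiff_self_eq_union]
    have hdisj : Disjoint V₁ (V₂ \ V₁) := Finset.disjoint_sdiff
    set s₁ : Plane := ∑ v ∈ V₁, w v • v with hs₁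
    set s₂ : Plane := ∑ v ∈ V₂ \ V₁, w v • v with hs₂
    have hsplit : s₁ + s₂ = 0 := by
      rw [hs₁, hs₂, ← Finset.sum_union hdisj, ← hunion, hsum]
    have hinner : (0:ℝ) ≤ ⟪s₁, s₂⟫ := by
      rw [hs₁, sum_inner]
      refine Finset.sum_nonneg fun a ha => ?_
      rw [real_inner_smul_left, hs₂, inner_sum]
      refine mul_nonneg (hw0 a (Finset.mem_union_left _ ha)) ?_
      refine Finset.sum_nonneg fun b hb => ?_
      rw [real_inner_smul_right]
      have hb' := Finset.mem_sdiff.mp hb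
      exact mul_nonneg (hw0 b (Finset.mem_union_right _ hb'.1))
        (le_of_lt (hx a ha b hb'.1))
    have hs2eq : s₂ = -s₁ := by linear_combination (norm := module) hsplit
    rw [hs2eq, inner_neg_right, real_inner_self_eq_norm_sq] at hinner
    have hs10 : s₁ = 0 := by
      have : ‖s₁‖ ^ 2 ≤ 0 := by nlinarith [sq_nonneg ‖s₁‖]
      have : ‖s₁‖ = 0 := by nlinarith [norm_nonneg s₁]
      exact norm_eq_zero.mp this
    have hs20 : s₂ = 0 := by rw [hs2eq, hs10, neg_zero]
    have hzero1 : ∀ v ∈ V₁, w v = 0 := by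
      have h1' : (0:ℝ) = ∑ v ∈ V₁, w v * ⟪w₁, v⟫ := by
        have : ⟪w₁, s₁⟫ = ∑ v ∈ V₁, w v * ⟪w₁, v⟫ := by
          rw [hs₁, inner_sum]
          exact Finset.sum_congr rfl fun v _ => real_inner_smul_right _ _ _
        rw [← this, hs10, inner_zero_right]
      intro v hv
      have hterm := (Finset.sum_eq_zero_iff_of_nonneg (fun i hi =>
        mul_nonneg (hw0 i (Finset.mem_union_left _ hi)) (le_of_lt (h₁ i hi)))).mp
        h1'.symm v hv
      rcases mul_eq_zero.mp hterm with h | h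
      · exact h
      · exact absurd h (ne_of_gt (h₁ v hv))
    have hzero2 : ∀ v ∈ V₂ \ V₁, w v = 0 := by
      have h2' : (0:ℝ) = ∑ v ∈ V₂ \ V₁, w v * ⟪w₂, v⟫ := by
        have : ⟪w₂, s₂⟫ = ∑ v ∈ V₂ \ V₁, w v * ⟪w₂, v⟫ := by
          rw [hs₂, inner_sum]
          exact Finset.sum_congr rfl fun v _ => real_inner_smul_right _ _ _
        rw [← this, hs20, inner_zero_right]
      intro v hv
      have hv2 := (Finset.mem_sdiff.mp hv).1
      have hterm := (Finset.sum_eq_zero_iff_of_nonneg (fun i hi =>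
        mul_nonneg (hw0 i (Finset.mem_union_right _ (Finset.mem_sdiff.mp hi).1))
          (le_of_lt (h₂ i (Finset.mem_sdiff.mp hi).1)))).mp h2'.symm v hv
      rcases mul_eq_zero.mp hterm with h | h
      · exact h
      · exact absurd h (ne_of_gt (h₂ v hv2))
    have : (1:ℝ) = 0 := by
      rw [← hw1, hunion, Finset.sum_union hdisj,
        Finset.sum_eq_zero hzero1, Finset.sum_eq_zero hzero2, add_zero]
    norm_num at this
  obtain ⟨f, u, hfu, hf⟩ := geometric_hahn_banach_point_closed
    (convex_convexHull ℝ _) ((V₁ ∪ V₂).finite_toSet.isClosed_convexHull ℝ) h0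
  refine ⟨(InnerProductSpace.toDual ℝ Plane).symm f, fun v hv => ?_⟩
  have hv' := hf v (subset_convexHull ℝ _ (by exact_mod_cast hv))
  rw [InnerProductSpace.toDual_symm_apply]
  have h00 : f 0 = 0 := map_zero f
  linarith

/-- If every point of `P` at maximal distance `r` from `c` lies strictly in the open
half-plane through `c` with direction `u`, then `c` can be perturbed to strictly
decrease the covering radius. -/
private lemma exists_smaller_cover (P : Finset Plane) (hne : P.Nonempty)
    (c u : Plane) (r : ℝ)
    (hcov : ∀ x ∈ P, dist x c ≤ r)
    (hfar : ∀ x ∈ P, dist x c = r → 0 < ⟪u, x - c⟫) :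
    ∃ c' : Plane, ∃ r' : ℝ, (∀ x ∈ P, dist x c' ≤ r') ∧ r' < r := by
  set τ : Plane → ℝ := fun x =>
    if dist x c = r then ⟪u, x - c⟫ / (‖u‖ ^ 2 + 1) else (r - dist x c) / (‖u‖ + 1) with hτ
  have hτpos : ∀ x ∈ P, 0 < τ x := by
    intro x hx
    by_cases hxr : dist x c = r
    · simp only [hτ, if_pos hxr]
      exact div_pos (hfar x hx hxr) (by positivity)
    · simp only [hτ, if_neg hxr]
      have := lt_of_le_of_ne (hcov x hx) hxr
      exact div_pos (by linarith) (by positivity)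
  set t : ℝ := P.inf' hne τ with ht
  have htpos : 0 < t := (Finset.lt_inf'_iff hne).mpr (fun x hx => hτpos x hx)
  have hstep : ∀ x ∈ P, dist x (c + t • u) < r := by
    intro x hx
    have htle : t ≤ τ x := Finset.inf'_le _ hx
    have hxd : x - (c + t • u) = (x - c) - t • u := by abel
    have hdist' : dist x (c + t • u) = ‖(x - c) - t • u‖ := by
      rw [dist_eq_norm, hxd]
    by_cases hxr : dist x c = r
    · have hip := hfar x hx hxr
      simp only [hτ, if_pos hxr] at htle
      have htle' : t * (‖u‖ ^ 2 + 1) ≤ ⟪u, x - c⟫ :=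
        (le_div_iff₀ (by positivity)).mp htle
      have hnormx : ‖x - c‖ = r := by rw [← dist_eq_norm]; exact hxr
      have hr0 : 0 ≤ r := by rw [← hxr]; exact dist_nonneg
      have hexp : ‖(x - c) - t • u‖ ^ 2
          = r ^ 2 - 2 * (t * ⟪u, x - c⟫) + t ^ 2 * ‖u‖ ^ 2 := by
        rw [norm_sub_sq_real, hnormx, real_inner_smul_right, real_inner_comm,
          norm_smul, Real.norm_eq_abs, mul_pow, sq_abs]
      have hkey : ‖(x - c) - t • u‖ ^ 2 < r ^ 2 := by
        rw [hexp]
        nlinarith [mul_pos htpos hip, sq_nonneg ‖u‖,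
          mul_le_mul_of_nonneg_left htle' (le_of_lt htpos)]
      rw [hdist']
      have h0 : 0 ≤ ‖(x - c) - t • u‖ := norm_nonneg _
      nlinarith [hkey, h0, hr0]
    · have hlt : dist x c < r := lt_of_le_of_ne (hcov x hx) hxr
      simp only [hτ, if_neg hxr] at htle
      have htle' : t * (‖u‖ + 1) ≤ r - dist x c :=
        (le_div_iff₀ (by positivity)).mp htle
      have htri : dist x (c + t • u) ≤ dist x c + ‖t • u‖ := by
        calc dist x (c + t • u) ≤ dist x c + dist c (c + t • u) := dist_triangle _ _ _
        _ = dist x c + ‖t • u‖ := by rw [dist_self_add_right]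
      have hn : ‖t • u‖ = t * ‖u‖ := by
        rw [norm_smul, Real.norm_eq_abs, abs_of_pos htpos]
      nlinarith [htri, hn, htpos, norm_nonneg u]
  refine ⟨c + t • u, P.sup' hne (fun x => dist x (c + t • u)),
    fun x hx => ?_, (Finset.sup'_lt_iff hne).mpr (fun x hx => hstep x hx)⟩
  exact Finset.le_sup' (fun y => dist y (c + t • u)) hx

/-- Law-of-cosines style inner product bound. -/
private lemma inner_pos_aux (cc z x : Plane) (d : ℝ)
    (hxz : dist x z ≤ d)
    (hpos : 0 < dist x cc ^ 2 + dist z cc ^ 2 - d ^ 2) :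
    0 < ⟪z - cc, x - cc⟫ := by
  have h1 : ‖(x - cc) - (z - cc)‖ = dist x z := by
    rw [sub_sub_sub_cancel_right, ← dist_eq_norm]
  have h2 := norm_sub_sq_real (x - cc) (z - cc)
  rw [h1] at h2
  have hx' : ‖x - cc‖ = dist x cc := (dist_eq_norm x cc).symm
  have hz' : ‖z - cc‖ = dist z cc := (dist_eq_norm z cc).symm
  rw [hx', hz'] at h2
  have hd0 : 0 ≤ d := le_trans dist_nonneg hxz
  have hsq : dist x z ^ 2 ≤ d ^ 2 := by
    nlinarith [dist_nonneg (x := x) (y := z)]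
  have hcomm := real_inner_comm (x - cc) (z - cc)
  nlinarith [h2]

/-- For every edge `(p, q)` of a maximum-weight spanning tree of `P`, the center `c`
of the smallest enclosing circle of `P` satisfies `|cp| + |cq| ≤ √2 · |pq|`;
i.e., the maximum-spanning-tree variant of Fingerhut's conjecture holds with
`α = √2`. -/
theorem fingerhut_variant_maxSpanningTree_sqrt_two
    (P : Finset Plane) (hP : 2 ≤ P.card)
    (T : SimpleGraph P) (hT : IsMaxSpanningTree T)
    (c : Plane) (r : ℝ)
    (hcover : ∀ p ∈ P, dist p c ≤ r)
    (hmin : ∀ (c' : Plane) (r' : ℝ), (∀ p ∈ P, dist p c' ≤ r') → r ≤ r') :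
    ∀ p q : P, T.Adj p q →
      dist c (p : Plane) + dist c (q : Plane) ≤
        Real.sqrt 2 * dist (p : Plane) (q : Plane) := by
  intro p q hadj
  by_contra hcon
  push_neg at hcon
  have hcon' : Real.sqrt 2 * dist (p : Plane) (q : Plane)
      < dist (p : Plane) c + dist (q : Plane) c := by
    rw [dist_comm (p : Plane) c, dist_comm (q : Plane) c]; exact hcon
  set G := T.deleteEdges {s(p, q)} with hG
  have hPne : P.Nonempty := Finset.card_pos.mp (by omega)
  have hpne : (p : Plane) ≠ (q : Plane) := fun h => hadj.ne (Subtype.coe_injective h)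
  have hd0 : 0 < dist (p : Plane) (q : Plane) := dist_pos.mpr hpne
  have hap : dist (p : Plane) c ≤ r := hcover _ p.2
  have haq : dist (q : Plane) c ≤ r := hcover _ q.2
  have hap0 : 0 ≤ dist (p : Plane) c := dist_nonneg
  have haq0 : 0 ≤ dist (q : Plane) c := dist_nonneg
  have hsq : 2 * dist (p : Plane) (q : Plane) ^ 2
      < (dist (p : Plane) c + dist (q : Plane) c) ^ 2 := by
    have h1 : 0 ≤ Real.sqrt 2 * dist (p : Plane) (q : Plane) :=
      mul_nonneg (Real.sqrt_nonneg 2) dist_nonneg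
    nlinarith [Real.sq_sqrt (by norm_num : (0:ℝ) ≤ 2), hcon']
  have hbridge := (SimpleGraph.isAcyclic_iff_forall_adj_isBridge.mp hT.2.1) hadj
  rw [SimpleGraph.isBridge_iff] at hbridge
  have hqp : ¬ G.Reachable q p := fun h => hbridge h.symm
  have hpp : G.Reachable p p := SimpleGraph.Reachable.refl _
  have hcross : ∀ v w : ↥P, G.Reachable v p → ¬ G.Reachable w p →
      dist (v : Plane) (w : Plane) ≤ dist (p : Plane) (q : Plane) :=
    fun v w hv hw => cross_dist_le P T hT p q hadj v w hv hw
  have hposq : 0 < r ^ 2 + dist (q : Plane) c ^ 2 - dist (p : Plane) (q : Plane) ^ 2 := by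
    nlinarith [hap, haq, hsq, hap0, haq0]
  have hposp : 0 < r ^ 2 + dist (p : Plane) c ^ 2 - dist (p : Plane) (q : Plane) ^ 2 := by
    nlinarith [hap, haq, hsq, hap0, haq0]
  have hposr : 0 < r ^ 2 + r ^ 2 - dist (p : Plane) (q : Plane) ^ 2 := by
    nlinarith [hap, haq, hsq, hap0, haq0]
  set Vp : Finset Plane := (Finset.univ.filter
      (fun v : ↥P => dist (v : Plane) c = r ∧ G.Reachable v p)).image
      (fun v : ↥P => (v : Plane) - c) with hVp
  set Vq : Finset Plane := (Finset.univ.filter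
      (fun v : ↥P => dist (v : Plane) c = r ∧ ¬ G.Reachable v p)).image
      (fun v : ↥P => (v : Plane) - c) with hVq
  have h₁ : ∀ v ∈ Vp, 0 < ⟪(q : Plane) - c, v⟫ := by
    intro v hv
    rw [hVp, Finset.mem_image] at hv
    obtain ⟨z, hz, rfl⟩ := hv
    rw [Finset.mem_filter] at hz
    obtain ⟨-, hzr, hzreach⟩ := hz
    have hdist : dist (z : Plane) (q : Plane) ≤ dist (p : Plane) (q : Plane) :=
      hcross z q hzreach hqp
    exact inner_pos_aux c (q : Plane) (z : Plane) _ hdist (by rw [hzr]; exact hposq)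
  have h₂ : ∀ v ∈ Vq, 0 < ⟪(p : Plane) - c, v⟫ := by
    intro v hv
    rw [hVq, Finset.mem_image] at hv
    obtain ⟨z, hz, rfl⟩ := hv
    rw [Finset.mem_filter] at hz
    obtain ⟨-, hzr, hzreach⟩ := hz
    have hdist : dist (z : Plane) (p : Plane) ≤ dist (p : Plane) (q : Plane) := by
      rw [dist_comm]
      exact hcross p z hpp hzreach
    exact inner_pos_aux c (p : Plane) (z : Plane) _ hdist (by rw [hzr]; exact hposp)
  have h₃ : ∀ v ∈ Vp, ∀ w ∈ Vq, 0 < ⟪v, w⟫ := by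
    intro v hv w hw
    rw [hVp, Finset.mem_image] at hv
    obtain ⟨z, hz, rfl⟩ := hv
    rw [Finset.mem_filter] at hz
    obtain ⟨-, hzr, hzreach⟩ := hz
    rw [hVq, Finset.mem_image] at hw
    obtain ⟨z', hz', rfl⟩ := hw
    rw [Finset.mem_filter] at hz'
    obtain ⟨-, hzr', hzreach'⟩ := hz'
    have hdist : dist (z' : Plane) (z : Plane) ≤ dist (p : Plane) (q : Plane) := by
      rw [dist_comm]
      exact hcross z z' hzreach hzreach'
    exact inner_pos_aux c (z : Plane) (z' : Plane) _ hdist (by rw [hzr, hzr']; exact hposr)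
  obtain ⟨u, hu⟩ := exists_inner_pos Vp Vq _ _ h₁ h₂ h₃
  have hfar : ∀ z ∈ P, dist z c = r → 0 < ⟪u, z - c⟫ := by
    intro z hzP hzr
    by_cases hreach : G.Reachable ⟨z, hzP⟩ p
    · exact hu _ (Finset.mem_union_left _ (Finset.mem_image.mpr
        ⟨⟨z, hzP⟩, Finset.mem_filter.mpr ⟨Finset.mem_univ _, hzr, hreach⟩, rfl⟩))
    · exact hu _ (Finset.mem_union_right _ (Finset.mem_image.mpr
        ⟨⟨z, hzP⟩, Finset.mem_filter.mpr ⟨Finset.mem_univ _, hzr, hreach⟩, rfl⟩))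
  obtain ⟨c', r', hc', hr'⟩ := exists_smaller_cover P hPne c u r hcover hfar
  exact absurd (hmin c' r' hc') (not_le.mpr hr')
end

section
/- Let P be a finite set of at least two points in the Euclidean plane whose smallest enclosing circle is the unit circle C* centered at the origin. Then either each of the arcs A₁ and A₃ contains a point of P, or each of the arcs A₂ and A₄ contains a point of P, where A₁, A₂, A₃, A₄ are the four closed arcs of C* obtained by cutting C* with the x-axis and the y-axis (A₁ is the arc with x ≥ 0, y ≥ 0; A₂ the arc with x ≤ 0, y ≥ 0; A₃ the arc with x ≤ 0, y ≤ 0; A₄ the arc with x ≥ 0, y ≤ 0). -/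
open Finset in
lemma shrink (P : Finset Plane) (hne : P.Nonempty) (hcover : ∀ p ∈ P, ‖p‖ ≤ 1)
    (v : Plane) (hv : ‖v‖ = 1)
    (h : ∀ p ∈ P, ‖p‖ = 1 → 0 < (inner ℝ p v : ℝ)) :
    ∃ c r, r < 1 ∧ ∀ p ∈ P, dist p c ≤ r := by
  set e : Plane → ℝ := fun p => if ‖p‖ = 1 then (inner ℝ p v : ℝ) else (1 - ‖p‖) / 2 with he
  have hpos : ∀ p ∈ P, 0 < e p := by
    intro p hp
    by_cases h1 : ‖p‖ = 1
    · simpa [he, h1] using h p hp h1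
    · have := hcover p hp
      have : ‖p‖ < 1 := lt_of_le_of_ne this h1
      simp [he, h1]; linarith
  have key : ∀ p ∈ P, ∀ ε : ℝ, 0 < ε → ε ≤ e p → dist p (ε • v) < 1 := by
    intro p hp ε hε hεe
    by_cases h1 : ‖p‖ = 1
    · have hεe' : ε ≤ (inner ℝ p v : ℝ) := by simpa [he, h1] using hεe
      have hsq : dist p (ε • v) ^ 2 = ‖p‖ ^ 2 - 2 * (ε * (inner ℝ p v : ℝ)) + (|ε| * ‖v‖) ^ 2 := by
        rw [dist_eq_norm, norm_sub_sq_real p (ε • v), real_inner_smul_right, norm_smul]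
        simp
      rw [h1, hv, abs_of_pos hε] at hsq
      have hd0 : (0:ℝ) ≤ dist p (ε • v) := dist_nonneg
      nlinarith [h p hp h1]
    · have hlt : ‖p‖ < 1 := lt_of_le_of_ne (hcover p hp) h1
      have hεe' : ε ≤ (1 - ‖p‖) / 2 := by simpa [he, h1] using hεe
      calc dist p (ε • v) = ‖p - ε • v‖ := dist_eq_norm _ _
        _ ≤ ‖p‖ + ‖ε • v‖ := norm_sub_le _ _
        _ = ‖p‖ + ε := by rw [norm_smul, hv, Real.norm_eq_abs, abs_of_pos hε]; ring
        _ < 1 := by linarith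
  set ε := (P.image e).min' (hne.image e) with hεdef
  have hεpos : 0 < ε := by
    obtain ⟨p, hp, hpe⟩ := Finset.mem_image.mp ((P.image e).min'_mem (hne.image e))
    rw [hεdef, ← hpe]; exact hpos p hp
  have hεle : ∀ p ∈ P, ε ≤ e p := fun p hp =>
    Finset.min'_le _ _ (Finset.mem_image_of_mem e hp)
  set c := ε • v with hc
  set r := (P.image (fun p => dist p c)).max' (hne.image _) with hrdef
  refine ⟨c, r, ?_, ?_⟩
  · obtain ⟨p, hp, hpe⟩ := Finset.mem_image.mp ((P.image _).max'_mem (hne.image (fun p => dist p c)))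
    rw [hrdef, ← hpe]
    exact key p hp ε hεpos (hεle p hp)
  · intro p hp
    exact Finset.le_max' _ (dist p c) (Finset.mem_image_of_mem (fun q => dist q c) hp)

/-- If the smallest enclosing circle of a finite set `P` of at least two points in the
plane is the unit circle centered at the origin, then either each of the closed arcs
`A₁` (x ≥ 0, y ≥ 0) and `A₃` (x ≤ 0, y ≤ 0) contains a point of `P`, or each of the
closed arcs `A₂` (x ≤ 0, y ≥ 0) and `A₄` (x ≥ 0, y ≤ 0) contains a point of `P`. -/
theorem opposite_arcs_contain_points
    (P : Finset Plane) (hP : 2 ≤ P.card)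
    (hcover : ∀ p ∈ P, dist p (0 : Plane) ≤ 1)
    (hmin : ∀ (c : Plane) (r : ℝ), (∀ p ∈ P, dist p c ≤ r) → 1 ≤ r) :
    ((∃ t ∈ P, ‖t‖ = 1 ∧ 0 ≤ t 0 ∧ 0 ≤ t 1) ∧
      (∃ t ∈ P, ‖t‖ = 1 ∧ t 0 ≤ 0 ∧ t 1 ≤ 0)) ∨
    ((∃ t ∈ P, ‖t‖ = 1 ∧ t 0 ≤ 0 ∧ 0 ≤ t 1) ∧
      (∃ t ∈ P, ‖t‖ = 1 ∧ 0 ≤ t 0 ∧ t 1 ≤ 0)) := by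
  have hne : P.Nonempty := Finset.card_pos.mp (by omega)
  have hcov : ∀ p ∈ P, ‖p‖ ≤ 1 := by
    intro p hp; simpa [dist_zero_right] using hcover p hp
  by_contra hcon
  rw [not_or, not_and_or, not_and_or] at hcon
  obtain ⟨h13, h24⟩ := hcon
  have contra : ∀ (v : Plane), ‖v‖ = 1 → (∀ p ∈ P, ‖p‖ = 1 → 0 < (inner ℝ p v : ℝ)) → False := by
    intro v hv hall
    obtain ⟨c, r, hr, hd⟩ := shrink P hne hcov v hv hall
    exact absurd (hmin c r hd) (by linarith)
  have sgn : ∀ (i : Fin 2) (a : ℝ), ‖a‖ = 1 →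
      (∀ p ∈ P, ‖p‖ = 1 → 0 < a * p i) → False := by
    intro i a ha hall
    refine contra (EuclideanSpace.single i a) (by simpa using ha) ?_
    intro p hp h1
    have := hall p hp h1
    rw [EuclideanSpace.inner_single_right]
    simpa using this
  rcases h13 with h1 | h3 <;> rcases h24 with h2 | h4 <;> push_neg at *
  · -- ¬A₁, ¬A₂ : all boundary points have p 1 < 0
    refine sgn 1 (-1) (by norm_num) ?_
    intro p hp hn
    by_contra hle
    push_neg at hle
    have hp1 : 0 ≤ p 1 := by nlinarith
    rcases le_total 0 (p 0) with h | h
    · linarith [h1 p hp hn h]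
    · linarith [h2 p hp hn h]
  · -- ¬A₁, ¬A₄ : p 0 < 0
    refine sgn 0 (-1) (by norm_num) ?_
    intro p hp hn
    by_contra hle
    push_neg at hle
    have hp0 : 0 ≤ p 0 := by nlinarith
    rcases le_total 0 (p 1) with h | h
    · linarith [h1 p hp hn hp0]
    · linarith [h4 p hp hn hp0]
  · -- ¬A₃, ¬A₂ : p 0 > 0
    refine sgn 0 1 (by norm_num) ?_
    intro p hp hn
    by_contra hle
    push_neg at hle
    have hp0 : p 0 ≤ 0 := by nlinarith
    rcases le_total 0 (p 1) with h | h
    · linarith [h2 p hp hn hp0]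
    · linarith [h3 p hp hn hp0]
  · -- ¬A₃, ¬A₄ : p 1 > 0
    refine sgn 1 1 (by norm_num) ?_
    intro p hp hn
    by_contra hle
    push_neg at hle
    have hp1 : p 1 ≤ 0 := by nlinarith
    rcases le_total 0 (p 0) with h | h
    · linarith [h4 p hp hn h]
    · linarith [h3 p hp hn h]
end

section
/- Let c* be the origin in the Euclidean plane and let C* be the unit circle centered at c*. Let p = (−r, 0) with 0 < r ≤ 1 be a point on the negative x-axis, and let q be a point of the closed unit disk in the closed third quadrant (q₁ ≤ 0 and q₂ ≤ 0) with q ≠ c*, such that ∠p c* q < π/2 and |c*p| ≥ |c*q|. Then for every point t on the arc A₁ ∪ A₄ (i.e., t on C* with t₁ ≥ 0), |pt| > |pq|. -/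
/-- Let `p = (-r, 0)` with `0 < r ≤ 1` and let `q ≠ 0` be a point of the closed unit
disk in the closed third quadrant, with `∠ p 0 q < π/2` and `|0p| ≥ |0q|`. Then every
point `t` of the closed right unit semicircle `A₁ ∪ A₄` satisfies `|pt| > |pq|`. -/
theorem dist_p_right_arc_gt
    (r : ℝ) (hr0 : 0 < r) (hr1 : r ≤ 1)
    (p q : Plane) (hp0 : p 0 = -r) (hp1 : p 1 = 0)
    (hq : ‖q‖ ≤ 1) (hq0 : q 0 ≤ 0) (hq1 : q 1 ≤ 0) (hqne : q ≠ 0)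
    (hangle : EuclideanGeometry.angle p (0 : Plane) q < Real.pi / 2)
    (hfar : dist (0 : Plane) q ≤ dist (0 : Plane) p) :
    ∀ t : Plane, ‖t‖ = 1 → 0 ≤ t 0 → dist p q < dist p t := by
  intro t ht ht0
  -- q 0 < 0
  have hq0' : q 0 < 0 := by
    rcases lt_or_eq_of_le hq0 with h | h
    · exact h
    · exfalso
      have hinner : (inner ℝ p q : ℝ) = 0 := by
        simp [PiLp.inner_apply, Fin.sum_univ_two, hp0, hp1, h]
      have : EuclideanGeometry.angle p (0 : Plane) q = Real.pi / 2 := by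
        have := (InnerProductGeometry.inner_eq_zero_iff_angle_eq_pi_div_two p q).mp hinner
        simpa [EuclideanGeometry.angle] using this
      linarith
  have hdq : dist p q ^ 2 = (p 0 - q 0) ^ 2 + (p 1 - q 1) ^ 2 := by
    rw [EuclideanSpace.dist_eq, Real.sq_sqrt (by positivity)]
    simp [Fin.sum_univ_two, Real.dist_eq, sq_abs]
  have hdt : dist p t ^ 2 = (p 0 - t 0) ^ 2 + (p 1 - t 1) ^ 2 := by
    rw [EuclideanSpace.dist_eq, Real.sq_sqrt (by positivity)]
    simp [Fin.sum_univ_two, Real.dist_eq, sq_abs]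
  have hnq : q 0 ^ 2 + q 1 ^ 2 ≤ 1 := by
    have := EuclideanSpace.norm_eq q
    have h1 : Real.sqrt (q 0 ^ 2 + q 1 ^ 2) ≤ 1 := by
      rw [EuclideanSpace.norm_eq] at hq
      simpa [Fin.sum_univ_two, sq_abs, Real.norm_eq_abs] using hq
    nlinarith [Real.sq_sqrt (by positivity : (0:ℝ) ≤ q 0 ^ 2 + q 1 ^ 2),
      Real.sqrt_nonneg (q 0 ^ 2 + q 1 ^ 2)]
  have hnt : t 0 ^ 2 + t 1 ^ 2 = 1 := by
    have h1 : Real.sqrt (t 0 ^ 2 + t 1 ^ 2) = 1 := by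
      rw [EuclideanSpace.norm_eq] at ht
      simpa [Fin.sum_univ_two, sq_abs, Real.norm_eq_abs] using ht
    nlinarith [Real.sq_sqrt (by positivity : (0:ℝ) ≤ t 0 ^ 2 + t 1 ^ 2)]
  have hsq : dist p q ^ 2 < dist p t ^ 2 := by
    rw [hdq, hdt, hp0, hp1]
    nlinarith
  exact lt_of_pow_lt_pow_left₀ 2 dist_nonneg hsq
end

section
/- Let a, b, c be three points on a circle centered at a point O in the Euclidean plane, and suppose O lies in the interior of the triangle with vertices a, b, c. Then every angle of the triangle abc is acute, i.e., ∠bac < π/2, ∠abc < π/2, and ∠acb < π/2. -/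
open EuclideanGeometry InnerProductGeometry Real

/-- Inner-product positivity gives an acute angle. -/
lemma angle_lt_pi_div_two_of_inner_pos {E : Type*} [NormedAddCommGroup E]
    [InnerProductSpace ℝ E] {x y : E} (h : 0 < (inner ℝ x y : ℝ)) :
    InnerProductGeometry.angle x y < Real.pi / 2 := by
  have hx : x ≠ 0 := by rintro rfl; simp at h
  have hy : y ≠ 0 := by rintro rfl; simp at h
  rw [InnerProductGeometry.angle, Real.arccos_lt_pi_div_two]
  have hnx : 0 < ‖x‖ := norm_pos_iff.mpr hx
  have hny : 0 < ‖y‖ := norm_pos_iff.mpr hy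
  positivity

/-- Key algebraic lemma: if `u, v, w` are vectors of equal norm `ρ` and
`α•u+β•v+γ•w = 0` with positive coefficients, and `v + w ≠ 0`, then
`⟪v-u, w-u⟫ > 0`. -/
lemma inner_sub_sub_pos {E : Type*} [NormedAddCommGroup E] [InnerProductSpace ℝ E]
    {u v w : E} {α β γ ρ : ℝ} (hα : 0 < α) (hβ : 0 < β) (hγ : 0 < γ)
    (hu : ‖u‖ = ρ) (hv : ‖v‖ = ρ) (hw : ‖w‖ = ρ)
    (hsum : α • u + β • v + γ • w = 0) (hvw : v + w ≠ 0) :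
    0 < (inner ℝ (v - u) (w - u) : ℝ) := by
  have huu : (inner ℝ u u : ℝ) = ρ ^ 2 := by rw [real_inner_self_eq_norm_sq, hu]
  have hvv : (inner ℝ v v : ℝ) = ρ ^ 2 := by rw [real_inner_self_eq_norm_sq, hv]
  have hww : (inner ℝ w w : ℝ) = ρ ^ 2 := by rw [real_inner_self_eq_norm_sq, hw]
  have e_v : α * (inner ℝ u v : ℝ) + β * (inner ℝ v v : ℝ) + γ * (inner ℝ w v : ℝ) = 0 := by
    have : (inner ℝ (α • u + β • v + γ • w) v : ℝ) = 0 := by rw [hsum, inner_zero_left]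
    simpa [inner_add_left, real_inner_smul_left] using this
  have e_w : α * (inner ℝ u w : ℝ) + β * (inner ℝ v w : ℝ) + γ * (inner ℝ w w : ℝ) = 0 := by
    have : (inner ℝ (α • u + β • v + γ • w) w : ℝ) = 0 := by rw [hsum, inner_zero_left]
    simpa [inner_add_left, real_inner_smul_left] using this
  have hwv : (inner ℝ w v : ℝ) = (inner ℝ v w : ℝ) := real_inner_comm v w
  have hvu : (inner ℝ v u : ℝ) = (inner ℝ u v : ℝ) := real_inner_comm u v
  have hwu : (inner ℝ w u : ℝ) = (inner ℝ u w : ℝ) := real_inner_comm u w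
  have hexpand : (inner ℝ (v - u) (w - u) : ℝ)
      = (inner ℝ v w : ℝ) - (inner ℝ u w : ℝ) - (inner ℝ u v : ℝ) + ρ ^ 2 := by
    simp only [inner_sub_left, inner_sub_right]
    linarith [huu, hvu, hwu]
  have e_v' : α * (inner ℝ u v : ℝ) + β * ρ ^ 2 + γ * (inner ℝ v w : ℝ) = 0 := by
    linear_combination e_v - β * hvv - γ * hwv
  have e_w' : α * (inner ℝ u w : ℝ) + β * (inner ℝ v w : ℝ) + γ * ρ ^ 2 = 0 := by
    linear_combination e_w - γ * hww
  have key : α * (inner ℝ (v - u) (w - u) : ℝ)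
      = (α + β + γ) * ((inner ℝ v w : ℝ) + ρ ^ 2) := by
    linear_combination α * hexpand - e_v' - e_w'
  have hpos : 0 < (inner ℝ v w : ℝ) + ρ ^ 2 := by
    have h1 : 0 < (inner ℝ (v + w) (v + w) : ℝ) := by
      rw [real_inner_self_eq_norm_sq]
      have : 0 < ‖v + w‖ := norm_pos_iff.mpr hvw
      positivity
    have h2 : (inner ℝ (v + w) (v + w) : ℝ)
        = (inner ℝ v v : ℝ) + 2 * (inner ℝ v w : ℝ) + (inner ℝ w w : ℝ) := by
      simp only [inner_add_left, inner_add_right]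
      linarith [real_inner_comm v w]
    rw [h2, hvv, hww] at h1
    linarith
  nlinarith [mul_pos (show (0:ℝ) < α + β + γ by linarith) hpos]

theorem midpoint_ne_of_coord {basis : AffineBasis (Fin 3) ℝ Plane}
    {O : Plane} (i j k : Fin 3) (hij : i ≠ j) (hik : i ≠ k)
    (h : 0 < basis.coord i O) : O ≠ midpoint ℝ (basis j) (basis k) := by
  intro heq
  have : basis.coord i O = 0 := by
    rw [heq, AffineMap.map_midpoint, basis.coord_apply_ne hij,
      basis.coord_apply_ne hik]
    simp [midpoint_self]
  linarith

/-- If `a`, `b`, `c` lie on a circle of positive radius centered at `O` and `O` lies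
in the interior of the triangle `abc` (the interior of the convex hull of
`{a, b, c}`), then all three angles of the triangle are acute. -/
theorem triangle_acute_of_center_in_interior
    (O a b c : Plane) (ρ : ℝ) (hρ : 0 < ρ)
    (ha : dist O a = ρ) (hb : dist O b = ρ) (hc : dist O c = ρ)
    (hO : O ∈ interior (convexHull ℝ ({a, b, c} : Set Plane))) :
    EuclideanGeometry.angle b a c < Real.pi / 2 ∧
    EuclideanGeometry.angle a b c < Real.pi / 2 ∧
    EuclideanGeometry.angle a c b < Real.pi / 2 := by
  classical
  set p : Fin 3 → Plane := ![a, b, c] with hp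
  have hrange : Set.range p = ({a, b, c} : Set Plane) := by
    ext x
    constructor
    · rintro ⟨i, rfl⟩
      fin_cases i <;> simp [hp]
    · rintro (rfl | rfl | rfl)
      exacts [⟨0, rfl⟩, ⟨1, rfl⟩, ⟨2, rfl⟩]
  have htop : affineSpan ℝ ({a, b, c} : Set Plane) = ⊤ :=
    interior_convexHull_nonempty_iff_affineSpan_eq_top.mp ⟨O, hO⟩
  have hind : AffineIndependent ℝ p := by
    rw [hp, affineIndependent_iff_not_collinear]
    intro hcol
    have hrange' : Set.range ![a, b, c] = ({a, b, c} : Set Plane) := hrange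
    rw [hrange'] at hcol
    have hvtop : vectorSpan ℝ ({a, b, c} : Set Plane) = ⊤ :=
      AffineSubspace.vectorSpan_eq_top_of_affineSpan_eq_top ℝ _ _ htop
    have h1 : Module.rank ℝ (vectorSpan ℝ ({a, b, c} : Set Plane)) ≤ 1 := hcol
    rw [hvtop, rank_top] at h1
    have h2 : Module.finrank ℝ Plane ≤ 1 := by
      exact_mod_cast Module.finrank_le_of_rank_le h1
    have h3 : Module.finrank ℝ Plane = 2 := by
      simp [finrank_euclideanSpace]
    omega
  let basis : AffineBasis (Fin 3) ℝ Plane := ⟨p, hind, by rw [show Set.range p = _ from hrange]; exact htop⟩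
  have hbasisrange : Set.range (basis : Fin 3 → Plane) = ({a, b, c} : Set Plane) := hrange
  have hcoord : ∀ i, 0 < basis.coord i O := by
    have := basis.interior_convexHull
    rw [hbasisrange] at this
    rw [this] at hO
    exact hO
  set w : Fin 3 → ℝ := fun i => basis.coord i O with hwdef
  have hsum1 : ∑ i, w i = 1 := basis.sum_coord_apply_eq_one O
  have hcomb : Finset.univ.affineCombination ℝ p w = O :=
    basis.affineCombination_coord_eq_self O
  have hzero : w 0 • (a - O) + w 1 • (b - O) + w 2 • (c - O) = 0 := by
    have h := Finset.univ.affineCombination_eq_weightedVSubOfPoint_vadd_of_sum_eq_one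
      w p hsum1 O
    rw [hcomb] at h
    have h2 : Finset.univ.weightedVSubOfPoint p O w = 0 := by
      have h' := h.symm
      rwa [vadd_eq_add, add_eq_right] at h'
    rw [Finset.weightedVSubOfPoint_apply, Fin.sum_univ_three] at h2
    simpa [hp, vsub_eq_sub] using h2
  have hna : ‖a - O‖ = ρ := by rw [← ha, dist_eq_norm, norm_sub_rev]
  have hnb : ‖b - O‖ = ρ := by rw [← hb, dist_eq_norm, norm_sub_rev]
  have hnc : ‖c - O‖ = ρ := by rw [← hc, dist_eq_norm, norm_sub_rev]
  have hb0 : basis 0 = a := rfl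
  have hb1 : basis 1 = b := rfl
  have hb2 : basis 2 = c := rfl
  have hmid_bc : (b - O) + (c - O) ≠ 0 := by
    intro h
    have hOm : O = midpoint ℝ b c := by
      rw [midpoint_eq_smul_add]
      have h2 : b + c = O + O := by
        linear_combination (norm := module) h
      rw [h2]
      rw [invOf_eq_inv]
      module
    exact midpoint_ne_of_coord 0 1 2 (by decide) (by decide) (hcoord 0)
      (by rw [hb1, hb2] at *; exact hOm)
  have hmid_ac : (a - O) + (c - O) ≠ 0 := by
    intro h
    have hOm : O = midpoint ℝ a c := by
      rw [midpoint_eq_smul_add]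
      have h2 : a + c = O + O := by
        linear_combination (norm := module) h
      rw [h2]
      rw [invOf_eq_inv]
      module
    exact midpoint_ne_of_coord 1 0 2 (by decide) (by decide) (hcoord 1)
      (by rw [hb0, hb2] at *; exact hOm)
  have hmid_ab : (a - O) + (b - O) ≠ 0 := by
    intro h
    have hOm : O = midpoint ℝ a b := by
      rw [midpoint_eq_smul_add]
      have h2 : a + b = O + O := by
        linear_combination (norm := module) h
      rw [h2]
      rw [invOf_eq_inv]
      module
    exact midpoint_ne_of_coord 2 0 1 (by decide) (by decide) (hcoord 2)
      (by rw [hb0, hb1] at *; exact hOm)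
  have ia : 0 < (inner ℝ (b - a) (c - a) : ℝ) := by
    have := inner_sub_sub_pos (hcoord 0) (hcoord 1) (hcoord 2)
      hna hnb hnc hzero hmid_bc
    have hba : b - a = (b - O) - (a - O) := by abel
    have hca : c - a = (c - O) - (a - O) := by abel
    rw [hba, hca]
    exact this
  have ib : 0 < (inner ℝ (a - b) (c - b) : ℝ) := by
    have hz : w 1 • (b - O) + w 0 • (a - O) + w 2 • (c - O) = 0 := by
      rw [← hzero]; abel
    have := inner_sub_sub_pos (hcoord 1) (hcoord 0) (hcoord 2)
      hnb hna hnc hz hmid_ac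
    have h1 : a - b = (a - O) - (b - O) := by abel
    have h2 : c - b = (c - O) - (b - O) := by abel
    rw [h1, h2]
    exact this
  have ic : 0 < (inner ℝ (a - c) (b - c) : ℝ) := by
    have hz : w 2 • (c - O) + w 0 • (a - O) + w 1 • (b - O) = 0 := by
      rw [← hzero]; abel
    have := inner_sub_sub_pos (hcoord 2) (hcoord 0) (hcoord 1)
      hnc hna hnb hz hmid_ab
    have h1 : a - c = (a - O) - (c - O) := by abel
    have h2 : b - c = (b - O) - (c - O) := by abel
    rw [h1, h2]
    exact this
  refine ⟨?_, ?_, ?_⟩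
  · have : EuclideanGeometry.angle b a c
        = InnerProductGeometry.angle (b - a) (c - a) := by
      rw [EuclideanGeometry.angle, vsub_eq_sub, vsub_eq_sub]
    rw [this]; exact angle_lt_pi_div_two_of_inner_pos ia
  · have : EuclideanGeometry.angle a b c
        = InnerProductGeometry.angle (a - b) (c - b) := by
      rw [EuclideanGeometry.angle, vsub_eq_sub, vsub_eq_sub]
    rw [this]; exact angle_lt_pi_div_two_of_inner_pos ib
  · have : EuclideanGeometry.angle a c b
        = InnerProductGeometry.angle (a - c) (b - c) := by
      rw [EuclideanGeometry.angle, vsub_eq_sub, vsub_eq_sub]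
    rw [this]; exact angle_lt_pi_div_two_of_inner_pos ic
end

section
/- For every real α with α < (1 + √3)/2, there exist a finite set P of points in the Euclidean plane and a maximum-weight spanning tree T of P such that no point c of the plane satisfies |ca| + |cb| ≤ α·|ab| for every edge (a,b) of T. Consequently, the constant α in the maximum-spanning-tree variant of Fingerhut's conjecture cannot be smaller than (1 + √3)/2. -/
open scoped Classical

/- Auxiliary: points of the plane given by coordinates. -/
noncomputable def FPt (x y : ℝ) : Plane := (WithLp.equiv 2 (Fin 2 → ℝ)).symm ![x, y]

@[simp] lemma FPt_apply_zero (x y : ℝ) : FPt x y 0 = x := rfl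
@[simp] lemma FPt_apply_one (x y : ℝ) : FPt x y 1 = y := rfl

lemma dist_FPt (x1 y1 x2 y2 : ℝ) :
    dist (FPt x1 y1) (FPt x2 y2) = Real.sqrt ((x1 - x2) ^ 2 + (y1 - y2) ^ 2) := by
  rw [EuclideanSpace.dist_eq]
  congr 1
  rw [Fin.sum_univ_two]
  simp [Real.dist_eq, sq_abs]

noncomputable def PA : Plane := FPt 0 1
noncomputable def PB : Plane := FPt (-(Real.sqrt 3)) 0
noncomputable def PC : Plane := FPt (Real.sqrt 3) 0
noncomputable def PD : Plane := FPt 0 (-1)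

lemma sq3 : Real.sqrt 3 ^ 2 = 3 := Real.sq_sqrt (by norm_num)
lemma one_le_sqrt3 : (1:ℝ) ≤ Real.sqrt 3 := by
  nlinarith [sq3, Real.sqrt_nonneg 3]

lemma dist_PA_PB : dist PA PB = 2 := by
  rw [PA, PB, dist_FPt, show (0 - -Real.sqrt 3) ^ 2 + ((1:ℝ) - 0) ^ 2 = 2 ^ 2 by
    nlinarith [sq3], Real.sqrt_sq (by norm_num : (0:ℝ) ≤ 2)]

lemma dist_PA_PC : dist PA PC = 2 := by
  rw [PA, PC, dist_FPt, show (0 - Real.sqrt 3) ^ 2 + ((1:ℝ) - 0) ^ 2 = 2 ^ 2 by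
    nlinarith [sq3], Real.sqrt_sq (by norm_num : (0:ℝ) ≤ 2)]

lemma dist_PA_PD : dist PA PD = 2 := by
  rw [PA, PD, dist_FPt, show ((0:ℝ) - 0) ^ 2 + ((1:ℝ) - -1) ^ 2 = 2 ^ 2 by norm_num,
    Real.sqrt_sq (by norm_num : (0:ℝ) ≤ 2)]

lemma dist_PB_PC : dist PB PC = 2 * Real.sqrt 3 := by
  rw [PB, PC, dist_FPt, show (-Real.sqrt 3 - Real.sqrt 3) ^ 2 + ((0:ℝ) - 0) ^ 2
      = (2 * Real.sqrt 3) ^ 2 by ring,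
    Real.sqrt_sq (by positivity)]

lemma dist_PB_PD : dist PB PD = 2 := by
  rw [PB, PD, dist_FPt, show (-Real.sqrt 3 - 0) ^ 2 + ((0:ℝ) - -1) ^ 2 = 2 ^ 2 by
    nlinarith [sq3], Real.sqrt_sq (by norm_num : (0:ℝ) ≤ 2)]

lemma dist_PC_PD : dist PC PD = 2 := by
  rw [PC, PD, dist_FPt, show (Real.sqrt 3 - 0) ^ 2 + ((0:ℝ) - -1) ^ 2 = 2 ^ 2 by
    nlinarith [sq3], Real.sqrt_sq (by norm_num : (0:ℝ) ≤ 2)]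

lemma ne_of_dist_pos {x y : Plane} {r : ℝ} (h : dist x y = r) (hr : 0 < r) : x ≠ y := by
  intro he; rw [he, dist_self] at h; linarith

lemma PA_ne_PB : PA ≠ PB := ne_of_dist_pos dist_PA_PB (by norm_num)
lemma PA_ne_PC : PA ≠ PC := ne_of_dist_pos dist_PA_PC (by norm_num)
lemma PA_ne_PD : PA ≠ PD := ne_of_dist_pos dist_PA_PD (by norm_num)
lemma PB_ne_PC : PB ≠ PC := ne_of_dist_pos dist_PB_PC (by positivity)
lemma PB_ne_PD : PB ≠ PD := ne_of_dist_pos dist_PB_PD (by norm_num)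
lemma PC_ne_PD : PC ≠ PD := ne_of_dist_pos dist_PC_PD (by norm_num)

attribute [irreducible] PA PB PC PD

noncomputable def Pset : Finset Plane := {PA, PB, PC, PD}

lemma PA_mem : PA ∈ Pset := by simp [Pset]
lemma PB_mem : PB ∈ Pset := by simp [Pset]
lemma PC_mem : PC ∈ Pset := by simp [Pset]
lemma PD_mem : PD ∈ Pset := by simp [Pset]

noncomputable def va : ↥Pset := ⟨PA, PA_mem⟩
noncomputable def vb : ↥Pset := ⟨PB, PB_mem⟩
noncomputable def vc : ↥Pset := ⟨PC, PC_mem⟩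
noncomputable def vd : ↥Pset := ⟨PD, PD_mem⟩

/-- The path `PA — PB — PC — PD`. -/
def TP : SimpleGraph ↥Pset where
  Adj u v :=
    ((u : Plane) = PA ∧ (v : Plane) = PB ∨ (u : Plane) = PB ∧ (v : Plane) = PA) ∨
    ((u : Plane) = PB ∧ (v : Plane) = PC ∨ (u : Plane) = PC ∧ (v : Plane) = PB) ∨
    ((u : Plane) = PC ∧ (v : Plane) = PD ∨ (u : Plane) = PD ∧ (v : Plane) = PC)
  symm := by constructor; intro u v h; tauto
  loopless := by
    constructor; intro u h
    rcases h with (⟨h1, h2⟩ | ⟨h1, h2⟩) | (⟨h1, h2⟩ | ⟨h1, h2⟩) | (⟨h1, h2⟩ | ⟨h1, h2⟩) <;>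
      rw [h1] at h2
    exacts [PA_ne_PB h2, PA_ne_PB h2.symm, PB_ne_PC h2, PB_ne_PC h2.symm,
      PC_ne_PD h2, PC_ne_PD h2.symm]

lemma vert_cases (u : ↥Pset) : u = va ∨ u = vb ∨ u = vc ∨ u = vd := by
  have hu := u.2
  simp only [Pset, Finset.mem_insert, Finset.mem_singleton] at hu
  rcases hu with h | h | h | h
  · exact Or.inl (Subtype.ext h)
  · exact Or.inr (Or.inl (Subtype.ext h))
  · exact Or.inr (Or.inr (Or.inl (Subtype.ext h)))
  · exact Or.inr (Or.inr (Or.inr (Subtype.ext h)))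

lemma adj_ab : TP.Adj va vb := Or.inl (Or.inl ⟨rfl, rfl⟩)
lemma adj_bc : TP.Adj vb vc := Or.inr (Or.inl (Or.inl ⟨rfl, rfl⟩))
lemma adj_cd : TP.Adj vc vd := Or.inr (Or.inr (Or.inl ⟨rfl, rfl⟩))

lemma TP_connected : TP.Connected := by
  rw [SimpleGraph.connected_iff]
  refine ⟨?_, ⟨va⟩⟩
  have key : ∀ u, TP.Reachable va u := by
    intro u
    rcases vert_cases u with rfl | rfl | rfl | rfl
    · exact SimpleGraph.Reachable.refl va
    · exact adj_ab.reachable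
    · exact adj_ab.reachable.trans adj_bc.reachable
    · exact (adj_ab.reachable.trans adj_bc.reachable).trans adj_cd.reachable
  intro u v
  exact (key u).symm.trans (key v)

lemma TP_edgeSet : TP.edgeSet = {s(va, vb), s(vb, vc), s(vc, vd)} := by
  ext e
  refine Sym2.ind (fun u v => ?_) e
  simp only [SimpleGraph.mem_edgeSet, Set.mem_insert_iff, Set.mem_singleton_iff,
    Sym2.eq_iff]
  constructor
  · rintro ((⟨h1, h2⟩ | ⟨h1, h2⟩) | (⟨h1, h2⟩ | ⟨h1, h2⟩) | (⟨h1, h2⟩ | ⟨h1, h2⟩))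
    · exact Or.inl (Or.inl ⟨Subtype.ext h1, Subtype.ext h2⟩)
    · exact Or.inl (Or.inr ⟨Subtype.ext h1, Subtype.ext h2⟩)
    · exact Or.inr (Or.inl (Or.inl ⟨Subtype.ext h1, Subtype.ext h2⟩))
    · exact Or.inr (Or.inl (Or.inr ⟨Subtype.ext h1, Subtype.ext h2⟩))
    · exact Or.inr (Or.inr (Or.inl ⟨Subtype.ext h1, Subtype.ext h2⟩))
    · exact Or.inr (Or.inr (Or.inr ⟨Subtype.ext h1, Subtype.ext h2⟩))
  · rintro ((⟨rfl, rfl⟩ | ⟨rfl, rfl⟩) | (⟨rfl, rfl⟩ | ⟨rfl, rfl⟩) | (⟨rfl, rfl⟩ | ⟨rfl, rfl⟩))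
    · exact adj_ab
    · exact adj_ab.symm
    · exact adj_bc
    · exact adj_bc.symm
    · exact adj_cd
    · exact adj_cd.symm

lemma va_ne_vb : va ≠ vb := fun h => PA_ne_PB (congrArg Subtype.val h)
lemma va_ne_vc : va ≠ vc := fun h => PA_ne_PC (congrArg Subtype.val h)
lemma va_ne_vd : va ≠ vd := fun h => PA_ne_PD (congrArg Subtype.val h)
lemma vb_ne_vc : vb ≠ vc := fun h => PB_ne_PC (congrArg Subtype.val h)
lemma vb_ne_vd : vb ≠ vd := fun h => PB_ne_PD (congrArg Subtype.val h)
lemma vc_ne_vd : vc ≠ vd := fun h => PC_ne_PD (congrArg Subtype.val h)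

lemma sym2_ab_ne_bc : s(va, vb) ≠ s(vb, vc) := by
  intro hh
  rw [Sym2.eq_iff] at hh
  rcases hh with (⟨h1, h2⟩ | ⟨h1, h2⟩)
  · exact va_ne_vb h1
  · exact va_ne_vc h1

lemma sym2_ab_ne_cd : s(va, vb) ≠ s(vc, vd) := by
  intro hh
  rw [Sym2.eq_iff] at hh
  rcases hh with (⟨h1, h2⟩ | ⟨h1, h2⟩)
  · exact va_ne_vc h1
  · exact va_ne_vd h1

lemma sym2_bc_ne_cd : s(vb, vc) ≠ s(vc, vd) := by
  intro hh
  rw [Sym2.eq_iff] at hh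
  rcases hh with (⟨h1, h2⟩ | ⟨h1, h2⟩)
  · exact vb_ne_vc h1
  · exact vb_ne_vd h1

lemma TP_edgeFinset : TP.edgeFinset = {s(va, vb), s(vb, vc), s(vc, vd)} := by
  ext e
  rw [SimpleGraph.mem_edgeFinset, TP_edgeSet]
  simp [Set.mem_insert_iff, Finset.mem_insert]

lemma TP_edgeFinset_card : TP.edgeFinset.card = 3 := by
  rw [TP_edgeFinset]
  rw [Finset.card_insert_of_notMem (by
    simp only [Finset.mem_insert, Finset.mem_singleton]
    push_neg
    exact ⟨sym2_ab_ne_bc, sym2_ab_ne_cd⟩)]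
  rw [Finset.card_insert_of_notMem (by
    simp only [Finset.mem_singleton]
    exact sym2_bc_ne_cd)]
  simp

lemma card_Pset : Pset.card = 4 := by
  rw [Pset]
  rw [Finset.card_insert_of_notMem (by
    simp only [Finset.mem_insert, Finset.mem_singleton]
    push_neg
    exact ⟨PA_ne_PB, PA_ne_PC, PA_ne_PD⟩)]
  rw [Finset.card_insert_of_notMem (by
    simp only [Finset.mem_insert, Finset.mem_singleton]
    push_neg
    exact ⟨PB_ne_PC, PB_ne_PD⟩)]
  rw [Finset.card_insert_of_notMem (by
    simp only [Finset.mem_singleton]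
    exact PC_ne_PD)]
  simp

lemma card_coe_Pset : Fintype.card ↥Pset = 4 := by
  rw [Fintype.card_coe, card_Pset]

lemma TP_acyclic : TP.IsAcyclic := by
  intro v w hw
  have h3 : 3 ≤ w.length := hw.three_le_length
  have hle : w.length ≤ TP.edgeFinset.card := hw.isTrail.length_le_card_edgeFinset
  rw [TP_edgeFinset_card] at hle
  have hlen : w.length = 3 := le_antisymm hle h3
  -- destructure the length-3 closed walk
  cases w with
  | nil => simp at hlen
  | cons h1 p =>
    cases p with
    | nil => simp at hlen
    | cons h2 q =>
      cases q with
      | nil => simp at hlen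
      | cons h3' r =>
        cases r with
        | cons h4 r' => simp [SimpleGraph.Walk.length_cons] at hlen
        | nil =>
          have nAB := PA_ne_PB
          have nAC := PA_ne_PC
          have nAD := PA_ne_PD
          have nBC := PB_ne_PC
          have nBD := PB_ne_PD
          have nCD := PC_ne_PD
          rcases h1 with (⟨e1, e2⟩ | ⟨e1, e2⟩) | (⟨e1, e2⟩ | ⟨e1, e2⟩) | (⟨e1, e2⟩ | ⟨e1, e2⟩) <;>
          rcases h2 with (⟨f1, f2⟩ | ⟨f1, f2⟩) | (⟨f1, f2⟩ | ⟨f1, f2⟩) | (⟨f1, f2⟩ | ⟨f1, f2⟩) <;>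
          rcases h3' with (⟨g1, g2⟩ | ⟨g1, g2⟩) | (⟨g1, g2⟩ | ⟨g1, g2⟩) | (⟨g1, g2⟩ | ⟨g1, g2⟩) <;>
            first
              | exact nAB (e1.symm.trans g2)
              | exact nAB (g2.symm.trans e1)
              | exact nAC (e1.symm.trans g2)
              | exact nAC (g2.symm.trans e1)
              | exact nAD (e1.symm.trans g2)
              | exact nAD (g2.symm.trans e1)
              | exact nBC (e1.symm.trans g2)
              | exact nBC (g2.symm.trans e1)
              | exact nBD (e1.symm.trans g2)
              | exact nBD (g2.symm.trans e1)
              | exact nCD (e1.symm.trans g2)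
              | exact nCD (g2.symm.trans e1)
              | exact nAB (e2.symm.trans f1)
              | exact nAB (f1.symm.trans e2)
              | exact nAC (e2.symm.trans f1)
              | exact nAC (f1.symm.trans e2)
              | exact nAD (e2.symm.trans f1)
              | exact nAD (f1.symm.trans e2)
              | exact nBC (e2.symm.trans f1)
              | exact nBC (f1.symm.trans e2)
              | exact nBD (e2.symm.trans f1)
              | exact nBD (f1.symm.trans e2)
              | exact nCD (e2.symm.trans f1)
              | exact nCD (f1.symm.trans e2)
              | exact nAB (f2.symm.trans g1)
              | exact nAB (g1.symm.trans f2)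
              | exact nAC (f2.symm.trans g1)
              | exact nAC (g1.symm.trans f2)
              | exact nAD (f2.symm.trans g1)
              | exact nAD (g1.symm.trans f2)
              | exact nBC (f2.symm.trans g1)
              | exact nBC (g1.symm.trans f2)
              | exact nBD (f2.symm.trans g1)
              | exact nBD (g1.symm.trans f2)
              | exact nCD (f2.symm.trans g1)
              | exact nCD (g1.symm.trans f2)

lemma ite_two_le (p : Prop) [Decidable p] :
    (2:ℝ) ≤ if p then 2 * Real.sqrt 3 else 2 := by
  split_ifs
  · nlinarith [one_le_sqrt3]
  · exact le_refl 2

/-- For every `α < (1 + √3)/2` there is a finite point set `P` in the plane with a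
maximum-weight spanning tree `T` such that no point `c` of the plane satisfies
`|ca| + |cb| ≤ α·|ab|` for every edge `(a, b)` of `T`; hence the constant in the
maximum-spanning-tree variant of Fingerhut's conjecture cannot be below
`(1 + √3)/2`. -/
theorem fingerhut_maxSpanningTree_lower_bound
    (α : ℝ) (hα : α < (1 + Real.sqrt 3) / 2) :
    ∃ (P : Finset Plane) (T : SimpleGraph P), IsMaxSpanningTree T ∧
      ∀ c : Plane, ¬ (∀ a b : P, T.Adj a b →
        dist c (a : Plane) + dist c (b : Plane) ≤ α * dist (a : Plane) (b : Plane)) := by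
  refine ⟨Pset, TP, ⟨TP_connected, TP_acyclic, ?_⟩, ?_⟩
  · -- maximality
    intro T' hc ha
    have htree : T'.IsTree := ⟨hc, ha⟩
    have hcard : T'.edgeFinset.card + 1 = Fintype.card ↥Pset := htree.card_edgeFinset
    rw [card_coe_Pset] at hcard
    have hcard3 : T'.edgeFinset.card = 3 := by omega
    have hTP : edgeWeight TP = 4 + 2 * Real.sqrt 3 := by
      rw [edgeWeight, TP_edgeFinset]
      rw [Finset.sum_insert (by
        simp only [Finset.mem_insert, Finset.mem_singleton]
        push_neg
        exact ⟨sym2_ab_ne_bc, sym2_ab_ne_cd⟩)]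
      rw [Finset.sum_insert (by
        simp only [Finset.mem_singleton]
        exact sym2_bc_ne_cd)]
      rw [Finset.sum_singleton]
      simp only [Sym2.lift_mk]
      show dist (va : Plane) (vb : Plane) + (dist (vb : Plane) (vc : Plane)
        + dist (vc : Plane) (vd : Plane)) = 4 + 2 * Real.sqrt 3
      show dist PA PB + (dist PB PC + dist PC PD) = 4 + 2 * Real.sqrt 3
      rw [dist_PA_PB, dist_PB_PC, dist_PC_PD]; ring
    rw [hTP]
    have hbound : ∀ e ∈ T'.edgeFinset,
        Sym2.lift ⟨fun (a b : ↥Pset) => dist (a : Plane) (b : Plane),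
          fun _ _ => dist_comm _ _⟩ e
          ≤ (if e = s(vb, vc) then 2 * Real.sqrt 3 else 2) := by
      intro e _
      refine Sym2.ind (fun u v => ?_) e
      rw [Sym2.lift_mk]
      rcases vert_cases u with rfl | rfl | rfl | rfl <;>
        rcases vert_cases v with rfl | rfl | rfl | rfl <;>
      first
        | (rw [if_pos rfl]
           exact le_of_eq dist_PB_PC)
        | (rw [Sym2.eq_swap, if_pos rfl]
           show dist PC PB ≤ 2 * Real.sqrt 3
           rw [dist_comm]
           exact le_of_eq dist_PB_PC)
        | (refine le_trans ?_ (ite_two_le _)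
           first
             | (show dist PA PA ≤ 2; rw [dist_self]; norm_num)
             | (show dist PB PB ≤ 2; rw [dist_self]; norm_num)
             | (show dist PC PC ≤ 2; rw [dist_self]; norm_num)
             | (show dist PD PD ≤ 2; rw [dist_self]; norm_num)
             | (show dist PA PB ≤ 2; rw [dist_PA_PB])
             | (show dist PB PA ≤ 2; rw [dist_comm, dist_PA_PB])
             | (show dist PA PC ≤ 2; rw [dist_PA_PC])
             | (show dist PC PA ≤ 2; rw [dist_comm, dist_PA_PC])
             | (show dist PA PD ≤ 2; rw [dist_PA_PD])
             | (show dist PD PA ≤ 2; rw [dist_comm, dist_PA_PD])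
             | (show dist PB PD ≤ 2; rw [dist_PB_PD])
             | (show dist PD PB ≤ 2; rw [dist_comm, dist_PB_PD])
             | (show dist PC PD ≤ 2; rw [dist_PC_PD])
             | (show dist PD PC ≤ 2; rw [dist_comm, dist_PC_PD]))
    calc edgeWeight T' ≤ ∑ e ∈ T'.edgeFinset,
          (if e = s(vb, vc) then 2 * Real.sqrt 3 else 2) :=
        Finset.sum_le_sum hbound
      _ = ∑ e ∈ T'.edgeFinset,
          (2 + (if e = s(vb, vc) then 2 * Real.sqrt 3 - 2 else 0)) := by
        apply Finset.sum_congr rfl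
        intro e _
        split_ifs <;> ring
      _ = 2 * 3 + ∑ e ∈ T'.edgeFinset,
          (if e = s(vb, vc) then 2 * Real.sqrt 3 - 2 else 0) := by
        rw [Finset.sum_add_distrib, Finset.sum_const, hcard3]
        ring
      _ ≤ 2 * 3 + (2 * Real.sqrt 3 - 2) := by
        have := Finset.sum_ite_eq' T'.edgeFinset s(vb, vc)
          (fun _ => 2 * Real.sqrt 3 - 2)
        rw [this]
        have h1 : (0:ℝ) ≤ 2 * Real.sqrt 3 - 2 := by nlinarith [one_le_sqrt3]
        split_ifs <;> linarith
      _ = 4 + 2 * Real.sqrt 3 := by ring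
  · -- no center exists
    intro c hc
    have h1 := hc va vb adj_ab
    have h2 := hc vc vd adj_cd
    have e1 : dist c (va : Plane) + dist c (vb : Plane) = dist c PA + dist c PB := rfl
    have e2 : dist c (vc : Plane) + dist c (vd : Plane) = dist c PC + dist c PD := rfl
    have e3 : dist (va : Plane) (vb : Plane) = dist PA PB := rfl
    have e4 : dist (vc : Plane) (vd : Plane) = dist PC PD := rfl
    rw [e1, e3, dist_PA_PB] at h1
    rw [e2, e4, dist_PC_PD] at h2
    have t1 : dist PA PD ≤ dist c PA + dist c PD := by
      rw [dist_comm c PA]; exact dist_triangle PA c PD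
    have t2 : dist PB PC ≤ dist c PB + dist c PC := by
      rw [dist_comm c PB]; exact dist_triangle PB c PC
    rw [dist_PA_PD] at t1
    rw [dist_PB_PC] at t2
    linarith
end
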